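/- arXiv:1410.7209 — 6 statements merged into one kernel-verified Lean document; each statement's English description precedes it below -/
import Mathlib

section
/- Let T > 0, m ∈ ℕ and σ₁ ∈ ℝ be fixed. There exists a constant M > 0 such that for every real t with |t| ≥ 1, the contour integral along the straight segment from 0 to σ₁ + it satisfies |∫_{[0, σ₁+it]} wᵐ (tan(πw/T) − i·sgn(t)) dw| ≤ M. -/
/-- The contour integral of `g` along the straight line segment from `z₁` to `z₂`,
namely `∫_0^1 g (z₁ + τ (z₂ - z₁)) · (z₂ - z₁) dτ`. -/
noncomputable def segInt (g : ℂ → ℂ) (z₁ z₂ : ℂ) : ℂ :=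
  ∫ τ in (0:ℝ)..1, g (z₁ + (τ : ℂ) * (z₂ - z₁)) * (z₂ - z₁)

lemma one_add_exp (z : ℂ) :
    (1 : ℂ) + Complex.exp (2 * Complex.I * z) =
      2 * Complex.exp (Complex.I * z) * Complex.cos z := by
  rw [Complex.cos]
  calc (1 : ℂ) + Complex.exp (2 * Complex.I * z)
      = Complex.exp (Complex.I * z + -z * Complex.I)
        + Complex.exp (Complex.I * z + z * Complex.I) := by
        rw [show Complex.I * z + -z * Complex.I = 0 by ring,
          show Complex.I * z + z * Complex.I = 2 * Complex.I * z by ring, Complex.exp_zero]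
    _ = _ := by rw [Complex.exp_add, Complex.exp_add]; ring

lemma tan_sub_I (z : ℂ) (h : (1 : ℂ) + Complex.exp (2 * Complex.I * z) ≠ 0) :
    Complex.tan z - Complex.I =
      -2 * Complex.I * Complex.exp (2 * Complex.I * z) / (1 + Complex.exp (2 * Complex.I * z)) := by
  have hcos : Complex.cos z ≠ 0 := by
    intro h0
    apply h
    rw [one_add_exp, h0, mul_zero]
  rw [Complex.tan_eq_sin_div_cos, Complex.sin, Complex.cos]
  set u : ℂ := Complex.exp (z * Complex.I) with hu_def
  have hu : u ≠ 0 := Complex.exp_ne_zero _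
  have h1 : Complex.exp (-z * Complex.I) = u⁻¹ := by rw [neg_mul, Complex.exp_neg]
  have h2 : Complex.exp (2 * Complex.I * z) = u * u := by
    rw [hu_def, ← Complex.exp_add]; ring_nf
  have hden : u + u⁻¹ ≠ 0 := by
    intro h0
    apply hcos
    rw [Complex.cos, h1, h0, zero_div]
  have h1uu : (1 : ℂ) + u * u ≠ 0 := by rw [← h2]; exact h
  have h1uu' : (1 : ℂ) + u ^ 2 ≠ 0 := by rw [sq]; exact h1uu
  rw [h1, h2]
  clear_value u
  field_simp [h1uu']
  have hinv : (1 + u ^ 2) * (1 + u ^ 2)⁻¹ = 1 := mul_inv_cancel₀ h1uu'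
  rw [add_comm (u ^ 2) 1, div_sub_one h1uu', div_mul_cancel₀ _ h1uu']
  ring

lemma tan_bound (a : ℝ) (ha : 0 ≤ a) :
    ∃ C : ℝ, 0 < C ∧ ∀ z : ℂ, 0 ≤ z.im → |z.re| ≤ a * z.im →
      ‖(Complex.tan z - Complex.I)‖ ≤ C * Real.exp (-2 * z.im) := by
  -- compact region near the real axis
  set K : Set ℂ := {z : ℂ | 0 ≤ z.im ∧ z.im ≤ 1 ∧ |z.re| ≤ a * z.im} with hK_def
  have hKclosed : IsClosed K := by
    apply IsClosed.inter (isClosed_le continuous_const Complex.continuous_im)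
    exact IsClosed.inter (isClosed_le Complex.continuous_im continuous_const)
      (isClosed_le (continuous_abs.comp Complex.continuous_re)
        (continuous_const.mul Complex.continuous_im))
  have hKbdd : Bornology.IsBounded K := by
    apply Bornology.IsBounded.subset (Metric.isBounded_closedBall (x := (0:ℂ)) (r := a + 1))
    rintro z ⟨h1, h2, h3⟩
    simp only [Metric.mem_closedBall, dist_zero_right]
    calc ‖z‖ ≤ |z.re| + |z.im| := Complex.norm_le_abs_re_add_abs_im z
      _ ≤ a * z.im + |z.im| := by gcongr
      _ ≤ a * 1 + 1 := by
          rw [abs_of_nonneg h1]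
          gcongr
      _ = a + 1 := by ring
  have hKcompact : IsCompact K := Metric.isCompact_of_isClosed_isBounded hKclosed hKbdd
  have hcosne : ∀ z ∈ K, Complex.cos z ≠ 0 := by
    rintro z ⟨h1, h2, h3⟩ hcos
    obtain ⟨k, hk⟩ := Complex.cos_eq_zero_iff.mp hcos
    have him : z.im = 0 := by rw [hk]; simp
    have hre : z.re = 0 := by
      have h4 := h3
      rw [him, mul_zero] at h4
      exact abs_nonpos_iff.mp h4
    have hz : z = 0 := Complex.ext hre him
    rw [hz, Complex.cos_zero] at hcos
    exact one_ne_zero hcos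
  have hcont : ContinuousOn (fun z => Complex.tan z - Complex.I) K :=
    (Complex.continuousOn_tan.mono (fun z hz => hcosne z hz)).sub continuousOn_const
  obtain ⟨C₀, hC₀⟩ := hKcompact.exists_bound_of_continuousOn hcont
  have hC₀0 : 0 ≤ C₀ := by
    have h0K : (0:ℂ) ∈ K := by
      refine ⟨le_refl 0, zero_le_one, ?_⟩
      simp
    exact le_trans (norm_nonneg _) (hC₀ 0 h0K)
  refine ⟨max 4 (C₀ * Real.exp 2), lt_of_lt_of_le (by norm_num) (le_max_left _ _), ?_⟩
  intro z him hre
  by_cases hcase : Real.exp (-2 * z.im) ≤ 1 / 2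
  · -- far from the real axis: use the explicit formula
    have habs_exp : ‖(Complex.exp (2 * Complex.I * z))‖ = Real.exp (-2 * z.im) := by
      rw [Complex.norm_exp]
      congr 1
      simp [Complex.mul_re]
    have hne : (1 : ℂ) + Complex.exp (2 * Complex.I * z) ≠ 0 := by
      intro h0
      have : ‖(Complex.exp (2 * Complex.I * z))‖ = 1 := by
        have : Complex.exp (2 * Complex.I * z) = -1 := by linear_combination h0
        rw [this]
        simp
      rw [habs_exp] at this
      linarith
    have hden : (1:ℝ)/2 ≤ ‖(1 + Complex.exp (2 * Complex.I * z))‖ := by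
      have h4 : (1:ℝ) ≤ ‖(1 + Complex.exp (2 * Complex.I * z))‖
          + ‖(Complex.exp (2 * Complex.I * z))‖ := by
        have h5 := norm_add_le (1 + Complex.exp (2 * Complex.I * z))
          (-Complex.exp (2 * Complex.I * z))
        simpa using h5
      rw [habs_exp] at h4
      linarith
    have hnum : ‖(-2 * Complex.I * Complex.exp (2 * Complex.I * z))‖
        = 2 * Real.exp (-2 * z.im) := by
      rw [norm_mul, norm_mul, habs_exp]
      simp
    rw [tan_sub_I z hne, norm_div, hnum]
    calc 2 * Real.exp (-2 * z.im) / ‖(1 + Complex.exp (2 * Complex.I * z))‖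
        ≤ 2 * Real.exp (-2 * z.im) / (1/2) := by
          gcongr
      _ = 4 * Real.exp (-2 * z.im) := by ring
      _ ≤ max 4 (C₀ * Real.exp 2) * Real.exp (-2 * z.im) := by
          gcongr
          exact le_max_left _ _
  · -- close to the real axis: compact bound
    push_neg at hcase
    have him1 : z.im ≤ 1 := by
      by_contra hgt
      push_neg at hgt
      have : Real.exp (-2 * z.im) < Real.exp (-2) := by
        apply Real.exp_lt_exp.mpr
        linarith
      have h2 : Real.exp (-2) ≤ 1/2 := by
        have h3 : (3:ℝ) ≤ Real.exp 2 := by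
          have := Real.add_one_le_exp (2:ℝ)
          linarith
        have h4 : Real.exp (-2) * Real.exp 2 = 1 := by
          rw [← Real.exp_add]; norm_num
        nlinarith [Real.exp_pos (-2)]
      linarith
    have hzK : z ∈ K := ⟨him, him1, hre⟩
    have hb := hC₀ z hzK
    calc ‖(Complex.tan z - Complex.I)‖ ≤ C₀ := hb
      _ ≤ C₀ * Real.exp 2 * Real.exp (-2 * z.im) := by
          rw [mul_assoc, ← Real.exp_add]
          nlinarith [Real.one_le_exp (by linarith : (0:ℝ) ≤ 2 + -2 * z.im), hC₀0]
      _ ≤ max 4 (C₀ * Real.exp 2) * Real.exp (-2 * z.im) := by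
          gcongr
          exact le_max_right _ _

lemma tan_bound' (a : ℝ) (ha : 0 ≤ a) :
    ∃ C : ℝ, 0 < C ∧ ∀ (ε : ℝ), (ε = 1 ∨ ε = -1) → ∀ z : ℂ,
      0 ≤ ε * z.im → |z.re| ≤ a * (ε * z.im) →
      ‖(Complex.tan z - Complex.I * ε)‖ ≤ C * Real.exp (-2 * (ε * z.im)) := by
  obtain ⟨C, hC, hbd⟩ := tan_bound a ha
  refine ⟨C, hC, ?_⟩
  rintro ε (rfl | rfl) z him hre
  · simpa using hbd z (by simpa using him) (by simpa using hre)
  · have key : ‖(Complex.tan z - Complex.I * ((-1:ℝ):ℂ))‖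
        = ‖(Complex.tan ((starRingEnd ℂ) z) - Complex.I)‖ := by
      calc ‖(Complex.tan z - Complex.I * ((-1:ℝ):ℂ))‖
          = ‖((starRingEnd ℂ) (Complex.tan z - Complex.I * ((-1:ℝ):ℂ)))‖ :=
            (Complex.norm_conj _).symm
        _ = ‖(Complex.tan ((starRingEnd ℂ) z) - Complex.I)‖ := by
            rw [map_sub, ← Complex.tan_conj, map_mul, Complex.conj_I]
            congr 1
            rw [Complex.conj_ofReal]
            push_cast
            ring
    rw [key]
    have h1 : ((starRingEnd ℂ) z).im = -1 * z.im := by simp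
    have h2 : ((starRingEnd ℂ) z).re = z.re := Complex.conj_re z
    have := hbd ((starRingEnd ℂ) z) (by rw [h1]; exact him) (by rw [h1, h2]; exact hre)
    rw [h1] at this
    exact this

set_option maxHeartbeats 1000000 in
/-- Let `T > 0`, `m ∈ ℕ` and `σ₁ ∈ ℝ` be fixed.  There exists `M > 0` such
that for every real `t` with `|t| ≥ 1`, the contour integral along the straight segment
from `0` to `σ₁ + i t` satisfies `|∫_{[0, σ₁+it]} wᵐ (tan (π w / T) - i sgn t) dw| ≤ M`. -/
theorem segInt_pow_mul_tan_sub_sgn_bounded (T : ℝ) (hT : 0 < T) (m : ℕ) (σ₁ : ℝ) :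
    ∃ M : ℝ, 0 < M ∧ ∀ t : ℝ, 1 ≤ |t| →
      ‖segInt
          (fun w => w ^ m * (Complex.tan ((Real.pi : ℂ) * w / (T : ℂ))
            - Complex.I * ((t / |t| : ℝ) : ℂ)))
          0 ((σ₁ : ℂ) + (t : ℂ) * Complex.I)‖ ≤ M := by
  obtain ⟨C, hC, hbd⟩ := tan_bound' |σ₁| (abs_nonneg _)
  set c : ℝ := 2 * Real.pi / T with hc_def
  have hcpos : 0 < c := by positivity
  set K : ℝ := (m.factorial : ℝ) * (2 / c) ^ m with hK_def
  have hKpos : 0 < K := by positivity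
  have hMpos : 0 < 2 * C * (|σ₁| + 1) ^ (m + 1) * K / c := by
    apply div_pos _ hcpos
    exact mul_pos (mul_pos (by linarith) (pow_pos (by positivity) _)) hKpos
  refine ⟨2 * C * (|σ₁| + 1) ^ (m + 1) * K / c + 1, by linarith, ?_⟩
  intro t ht
  have ht0 : (0:ℝ) < |t| := lt_of_lt_of_le one_pos ht
  have htne : t ≠ 0 := fun h => by simp [h] at ht0
  set ε : ℝ := t / |t| with hε_def
  have hε : ε = 1 ∨ ε = -1 := by
    rcases htne.lt_or_gt with h | h
    · right; rw [hε_def, abs_of_neg h]; field_simp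
    · left; rw [hε_def, abs_of_pos h]; field_simp
  have hεt : ε * t = |t| := by
    rw [hε_def, div_mul_eq_mul_div, mul_comm, ← sq, ← sq_abs, sq,
      mul_div_assoc, div_self (ne_of_gt ht0), mul_one]
  set s : ℂ := (σ₁ : ℂ) + (t : ℂ) * Complex.I with hs_def
  have hs_im : s.im = t := by simp [hs_def]
  have hs_re : s.re = σ₁ := by simp [hs_def]
  have hs_abs : ‖s‖ ≤ (|σ₁| + 1) * |t| := by
    calc ‖s‖ ≤ ‖(σ₁:ℂ)‖ + ‖((t:ℂ) * Complex.I)‖ :=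
          norm_add_le _ _
      _ = |σ₁| + |t| := by simp
      _ ≤ (|σ₁| + 1) * |t| := by nlinarith [abs_nonneg σ₁]
  set b : ℝ := c * |t| / 2 with hb_def
  have hbpos : 0 < b := by rw [hb_def]; positivity
  set D : ℝ := C * (|σ₁| + 1) ^ (m + 1) * K * |t| with hD_def
  have hDpos : 0 < D := by
    rw [hD_def]
    exact mul_pos (mul_pos (mul_pos hC (pow_pos (by positivity) _)) hKpos) ht0
  clear_value c K ε s b D
  -- pointwise bound
  have hpt : ∀ τ ∈ Set.Ioc (0:ℝ) 1,
      ‖(((0:ℂ) + (τ:ℂ) * (s - 0)) ^ m *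
        (Complex.tan ((Real.pi:ℂ) * ((0:ℂ) + (τ:ℂ) * (s - 0)) / (T:ℂ))
          - Complex.I * (ε:ℂ)) * (s - 0))‖ ≤ D * Real.exp (-(b * τ)) := by
    intro τ hτ
    obtain ⟨hτ0, hτ1⟩ := hτ
    have hτ0' : (0:ℝ) ≤ τ := le_of_lt hτ0
    set z : ℂ := (Real.pi:ℂ) * ((0:ℂ) + (τ:ℂ) * (s - 0)) / (T:ℂ) with hz_def
    set r : ℝ := Real.pi * τ / T with hr_def
    have hr0 : 0 ≤ r := by positivity
    have hz_eq : z = ((r:ℝ):ℂ) * s := by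
      rw [hz_def, hr_def]
      push_cast
      field_simp
      ring
    have hz_im : z.im = r * t := by
      rw [hz_eq, Complex.mul_im]
      simp [hs_im]
    have hz_re : z.re = r * σ₁ := by
      rw [hz_eq, Complex.mul_re]
      simp [hs_re]
    have hεim : ε * z.im = r * |t| := by
      rw [hz_im, show ε * (r * t) = r * (ε * t) from by ring, hεt]
    have him : 0 ≤ ε * z.im := by
      rw [hεim]; positivity
    have hre : |z.re| ≤ |σ₁| * (ε * z.im) := by
      rw [hz_re, hεim, abs_mul, abs_of_nonneg hr0]
      nlinarith [mul_nonneg hr0 (abs_nonneg σ₁)]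
    have htan := hbd ε hε z him hre
    rw [hεim] at htan
    -- assemble
    rw [norm_mul, norm_mul, norm_pow]
    have habs_w : ‖((0:ℂ) + (τ:ℂ) * (s - 0))‖ = τ * ‖s‖ := by
      simp [abs_of_nonneg hτ0']
    rw [habs_w]
    have hss : ‖(s - 0)‖ = ‖s‖ := by rw [sub_zero]
    rw [hss]
    have hA : ‖s‖ ≤ (|σ₁| + 1) * |t| := hs_abs
    have hpow : (τ * ‖s‖) ^ m ≤ τ ^ m * ((|σ₁| + 1) * |t|) ^ m := by
      rw [mul_pow]
      gcongr
    have h2r : 2 * (r * |t|) = c * |t| * τ := by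
      rw [hr_def, hc_def]; field_simp
    have hK_bound : (τ * |t|) ^ m ≤ K * Real.exp (b * τ) := by
      have hx : 0 ≤ b * τ := by positivity
      have := Real.pow_div_factorial_le_exp (b * τ) hx m
      have h1 : (b * τ) ^ m ≤ (m.factorial : ℝ) * Real.exp (b * τ) := by
        rw [div_le_iff₀ (by positivity : (0:ℝ) < (m.factorial:ℝ))] at this
        linarith [this]
      have h2 : (τ * |t|) ^ m = (2 / c) ^ m * (b * τ) ^ m := by
        rw [← mul_pow, hb_def]
        congr 1
        field_simp
      rw [h2, hK_def]
      calc (2 / c) ^ m * (b * τ) ^ m ≤ (2 / c) ^ m * ((m.factorial : ℝ) * Real.exp (b * τ)) := by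
            gcongr
        _ = (m.factorial : ℝ) * (2 / c) ^ m * Real.exp (b * τ) := by ring
    calc (τ * ‖s‖) ^ m * ‖(Complex.tan z - Complex.I * (ε:ℂ))‖
          * ‖s‖
        ≤ (τ * ((|σ₁| + 1) * |t|)) ^ m * (C * Real.exp (-2 * (r * |t|)))
          * ((|σ₁| + 1) * |t|) := by
          gcongr <;> first
            | exact htan
            | exact hA
            | positivity
            | exact norm_nonneg _
      _ = C * (|σ₁| + 1) ^ (m + 1) * |t| * ((τ * |t|) ^ m * Real.exp (-(c * |t| * τ))) := by
          rw [show (-2 : ℝ) * (r * |t|) = -(2 * (r * |t|)) by ring, h2r,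
            mul_pow, mul_pow, mul_pow]
          ring
      _ ≤ C * (|σ₁| + 1) ^ (m + 1) * |t| * (K * Real.exp (b * τ) * Real.exp (-(c * |t| * τ))) := by
          gcongr
      _ = D * Real.exp (-(b * τ)) := by
          have hee : Real.exp (b * τ) * Real.exp (-(c * |t| * τ)) = Real.exp (-(b * τ)) := by
            rw [← Real.exp_add]
            congr 1
            rw [hb_def]; ring
          rw [hD_def, mul_assoc K, hee]
          ring
  -- integrate
  have hcont2 : Continuous fun τ : ℝ => D * Real.exp (-(b * τ)) :=
    continuous_const.mul (Real.continuous_exp.comp ((continuous_const.mul continuous_id).neg))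
  have hint_bound : IntervalIntegrable (fun τ => D * Real.exp (-(b * τ))) MeasureTheory.volume 0 1 :=
    hcont2.intervalIntegrable 0 1
  have hle := intervalIntegral.norm_integral_le_abs_of_norm_le
    (f := fun τ : ℝ => ((0:ℂ) + (τ:ℂ) * (s - 0)) ^ m *
        (Complex.tan ((Real.pi:ℂ) * ((0:ℂ) + (τ:ℂ) * (s - 0)) / (T:ℂ))
          - Complex.I * (ε:ℂ)) * (s - 0))
    (μ := MeasureTheory.volume) (a := 0) (b := 1)
    (by
      rw [MeasureTheory.ae_restrict_iff' measurableSet_uIoc]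
      apply MeasureTheory.ae_of_all
      intro τ hτ
      rw [Set.uIoc_of_le (by norm_num : (0:ℝ) ≤ 1)] at hτ
      exact hpt τ hτ)
    hint_bound
  -- compute the integral of the bound
  have hderiv : ∀ τ ∈ Set.uIcc (0:ℝ) 1, HasDerivAt (fun x => -(D / b) * Real.exp (-(b * x)))
      (D * Real.exp (-(b * τ))) τ := by
    intro τ _
    have h1 : HasDerivAt (fun x : ℝ => -(b * x)) (-b) τ := by
      simpa using ((hasDerivAt_id τ).const_mul (-b))
    have h2 := (Real.hasDerivAt_exp (-(b * τ))).comp τ h1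
    have h3 := h2.const_mul (-(D / b))
    refine h3.congr_deriv ?_
    rw [show -(D / b) * (Real.exp (-(b * τ)) * -b) = D / b * b * Real.exp (-(b * τ)) by ring,
      div_mul_cancel₀ D hbpos.ne']
  have hintval : ∫ τ in (0:ℝ)..1, D * Real.exp (-(b * τ))
      = -(D / b) * Real.exp (-(b * 1)) - -(D / b) * Real.exp (-(b * 0)) := by
    apply intervalIntegral.integral_eq_sub_of_hasDerivAt hderiv
    exact hint_bound
  have hintle : |∫ τ in (0:ℝ)..1, D * Real.exp (-(b * τ))| ≤ D / b := by
    rw [hintval]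
    rw [abs_of_nonneg]
    · have h1 : Real.exp (-(b * 1)) ≤ 1 := Real.exp_le_one_iff.mpr (by nlinarith)
      have h2 : Real.exp (-(b * 0)) = 1 := by simp
      rw [h2]
      have h3 : 0 < Real.exp (-(b*1)) := Real.exp_pos _
      have hDb : 0 < D / b := by exact div_pos hDpos hbpos
      nlinarith
    · have h1 : Real.exp (-(b * 1)) ≤ 1 := Real.exp_le_one_iff.mpr (by nlinarith)
      have h2 : Real.exp (-(b * 0)) = 1 := by simp
      rw [h2]
      have hDb : 0 < D / b := by exact div_pos hDpos hbpos
      nlinarith [Real.exp_pos (-(b*1))]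
  have hDb_val : D / b = 2 * C * (|σ₁| + 1) ^ (m + 1) * K / c := by
    rw [hD_def, hb_def]
    field_simp
  -- conclude
  have : ‖segInt
      (fun w => w ^ m * (Complex.tan ((Real.pi : ℂ) * w / (T : ℂ))
        - Complex.I * ((ε : ℝ) : ℂ)))
      0 s‖
      ≤ |∫ τ in (0:ℝ)..1, D * Real.exp (-(b * τ))| := by
    rw [segInt]
    exact hle
  calc ‖_‖ ≤ |∫ τ in (0:ℝ)..1, D * Real.exp (-(b * τ))| := this
    _ ≤ D / b := hintle
    _ = 2 * C * (|σ₁| + 1) ^ (m + 1) * K / c := hDb_val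
    _ ≤ 2 * C * (|σ₁| + 1) ^ (m + 1) * K / c + 1 := by linarith
end

section
/- Let T > 0, let m ≥ 1 be a natural number and let σ₁ ∈ ℝ be fixed. There exists a constant M > 0 such that for every real t with |t| ≥ 1, the contour integral along the straight segment from 0 to σ₁ + it satisfies |∫_{[0, σ₁+it]} wᵐ (cot(πw/T) + i·sgn(t)) dw| ≤ M, where the integrand wᵐ cot(πw/T) is extended by continuity at w = 0 (the simple pole of cot(πw/T) at 0 is removable after multiplication by wᵐ, m ≥ 1). -/
lemma real_key (k : ℕ) {x : ℝ} (hx : 0 < x) :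
    2 / (Real.exp (2*x) - 1) ≤ (2*(k:ℝ)+2)^k / x^(k+1) * Real.exp (-(x/2)) := by
  set E := Real.exp (x/2) with hE
  have hE1 : 1 < E := Real.one_lt_exp_iff.2 (by positivity)
  have hEpos : (0:ℝ) < E := lt_trans one_pos hE1
  have h2x : Real.exp (2*x) = E^4 := by
    rw [hE, show 2*x = (x/2)+(x/2)+(x/2)+(x/2) by ring, Real.exp_add, Real.exp_add,
      Real.exp_add]; ring
  have hxE : Real.exp x = E^2 := by
    rw [hE, show x = (x/2)+(x/2) by ring, Real.exp_add]; ring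
  have hsinh : 2*x ≤ E^2 - (E^2)⁻¹ := by
    have h1 : x < Real.sinh x := Real.self_lt_sinh_iff.2 hx
    rw [Real.sinh_eq, Real.exp_neg, hxE] at h1
    linarith
  have hinv : E^2 * (E^2)⁻¹ = 1 := mul_inv_cancel₀ (by positivity)
  have hmain : 2*x*E^2 ≤ E^4 - 1 := by nlinarith [sq_nonneg E, hsinh, hinv]
  have hpow : x^k ≤ (2*(k:ℝ)+2)^k * E := by
    have hc : (0:ℝ) < 2*(k:ℝ)+2 := by positivity
    have hu : x/(2*(k:ℝ)+2) ≤ Real.exp (x/(2*(k:ℝ)+2)) := by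
      linarith [Real.add_one_le_exp (x/(2*(k:ℝ)+2))]
    have hexpmono : Real.exp ((k:ℝ) * (x/(2*(k:ℝ)+2))) ≤ E := by
      rw [hE]
      apply Real.exp_le_exp.2
      rw [mul_div_assoc'] at *
      rw [div_le_div_iff₀ hc two_pos]
      nlinarith [hx, Nat.cast_nonneg (α := ℝ) k]
    calc x^k = ((2*(k:ℝ)+2) * (x/(2*(k:ℝ)+2)))^k := by rw [mul_div_cancel₀ _ (ne_of_gt hc)]
      _ = (2*(k:ℝ)+2)^k * (x/(2*(k:ℝ)+2))^k := mul_pow _ _ _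
      _ ≤ (2*(k:ℝ)+2)^k * (Real.exp (x/(2*(k:ℝ)+2)))^k := by
          gcongr
      _ = (2*(k:ℝ)+2)^k * Real.exp ((k:ℝ) * (x/(2*(k:ℝ)+2))) := by
          rw [Real.exp_nat_mul]
      _ ≤ (2*(k:ℝ)+2)^k * E := by
          exact mul_le_mul_of_nonneg_left hexpmono (by positivity)
  have hE4 : (0:ℝ) < E^4 - 1 := by
    have h4 : 1 < E^4 := one_lt_pow₀ hE1 (by norm_num)
    linarith
  rw [h2x, Real.exp_neg, ← hE]
  have hrw : (2*(k:ℝ)+2)^k / x^(k+1) * E⁻¹ = (2*(k:ℝ)+2)^k / (x^(k+1) * E) := by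
    field_simp
  rw [hrw, div_le_div_iff₀ hE4 (by positivity)]
  calc 2*(x^(k+1)*E) = (2*x*E) * x^k := by ring
    _ ≤ (2*x*E) * ((2*(k:ℝ)+2)^k * E) := by
        exact mul_le_mul_of_nonneg_left hpow (by positivity)
    _ = (2*(k:ℝ)+2)^k * (2*x*E^2) := by ring
    _ ≤ (2*(k:ℝ)+2)^k * (E^4 - 1) := mul_le_mul_of_nonneg_left hmain (by positivity)

lemma cot_add_I_bound {z : ℂ} (hz : 0 < z.im) :
    ‖Complex.cot z + Complex.I‖ ≤ 2 / (Real.exp (2*z.im) - 1) := by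
  set q := Complex.exp (2*Complex.I*z) with hq
  have hqabs : ‖q‖ = Real.exp (-(2*z.im)) := by
    rw [hq, Complex.norm_exp]
    congr 1
    simp [Complex.mul_re, Complex.I_re, Complex.I_im]
  have hqlt : ‖q‖ < 1 := by
    rw [hqabs, Real.exp_lt_one_iff]; linarith
  have hq1 : (1:ℂ) - q ≠ 0 := by
    intro h
    rw [sub_eq_zero] at h
    rw [← h] at hqlt
    simp at hqlt
  have hform : Complex.cot z + Complex.I = 2*q / (Complex.I * (1 - q)) := by
    rw [Complex.cot_eq_exp_ratio, ← hq, div_add' _ _ _ (mul_ne_zero Complex.I_ne_zero hq1),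
      show q + 1 + Complex.I * (Complex.I * (1 - q)) = 2*q by
        linear_combination (1 - q) * Complex.I_mul_I]
  rw [hform]
  rw [norm_div, norm_mul, norm_mul, Complex.norm_I, Complex.norm_two, one_mul]
  have hub : 1 - ‖q‖ ≤ ‖1 - q‖ := by
    have := norm_sub_norm_le (1:ℂ) q
    simpa using this
  have h1q : (0:ℝ) < 1 - ‖q‖ := by linarith
  calc 2 * ‖q‖ / ‖1 - q‖
      ≤ 2 * ‖q‖ / (1 - ‖q‖) := by
        gcongr
    _ = 2 / (Real.exp (2*z.im) - 1) := by
        have hF : 1 < Real.exp (2*z.im) := Real.one_lt_exp_iff.2 (by linarith)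
        have hF0 : Real.exp (2*z.im) ≠ 0 := by positivity
        rw [hqabs, Real.exp_neg, div_eq_div_iff
          (sub_ne_zero.2 fun h => by rw [eq_comm, inv_eq_one] at h; linarith)
          (sub_ne_zero.2 (ne_of_gt hF))]
        field_simp

lemma cot_sub_I_bound {z : ℂ} (hz : z.im < 0) :
    ‖Complex.cot z - Complex.I‖ ≤ 2 / (Real.exp (-(2*z.im)) - 1) := by
  have h := cot_add_I_bound (z := -z) (by simp; linarith)
  have hcn : Complex.cot (-z) = -Complex.cot z := by
    simp [Complex.cot, Complex.sin_neg, Complex.cos_neg, neg_div, div_neg]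
  rw [hcn, Complex.neg_im] at h
  calc ‖Complex.cot z - Complex.I‖
      = ‖-Complex.cot z + Complex.I‖ := by
        rw [show -Complex.cot z + Complex.I = -(Complex.cot z - Complex.I) by ring, norm_neg]
    _ ≤ 2 / (Real.exp (2*(-z.im)) - 1) := h
    _ = 2 / (Real.exp (-(2*z.im)) - 1) := by ring_nf



lemma exp_integral_le {a : ℝ} (ha : 0 < a) :
    ∫ τ in (0:ℝ)..1, Real.exp (-(a/2)*τ) ≤ 2/a := by
  have hderiv : ∀ x ∈ Set.uIcc (0:ℝ) 1,
      HasDerivAt (fun τ : ℝ => Real.exp (-(a/2)*τ) / (-(a/2))) (Real.exp (-(a/2)*x)) x := by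
    intro x _
    have h1 : HasDerivAt (fun τ : ℝ => -(a/2)*τ) (-(a/2)) x := by
      simpa using (hasDerivAt_id x).const_mul (-(a/2))
    have h2 := ((Real.hasDerivAt_exp (-(a/2)*x)).comp x h1).div_const (-(a/2))
    have hane : -(a/2) ≠ 0 := by linarith
    rw [mul_div_cancel_right₀ _ hane] at h2
    exact h2
  have hint : ∫ τ in (0:ℝ)..1, Real.exp (-(a/2)*τ) =
      Real.exp (-(a/2)*1) / (-(a/2)) - Real.exp (-(a/2)*0) / (-(a/2)) :=
    intervalIntegral.integral_eq_sub_of_hasDerivAt hderiv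
      ((Real.continuous_exp.comp (continuous_const.mul continuous_id)).intervalIntegrable 0 1)
  rw [hint]
  simp only [mul_one, mul_zero, Real.exp_zero]
  have hE : 0 < Real.exp (-(a/2)) := Real.exp_pos _
  have hrw : Real.exp (-(a/2))/(-(a/2)) - 1/(-(a/2)) = (1 - Real.exp (-(a/2))) * (2/a) := by
    field_simp [ne_of_gt ha]
    ring
  rw [hrw]
  have h2a : 0 < 2/a := by positivity
  nlinarith


/-- Let `T > 0`, `m ≥ 1` a natural number and `σ₁ ∈ ℝ` be fixed.  There
exists `M > 0` such that for every real `t` with `|t| ≥ 1`, the contour integral along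
the straight segment from `0` to `σ₁ + i t` satisfies
`|∫_{[0, σ₁+it]} wᵐ (cot (π w / T) + i sgn t) dw| ≤ M`.  (The singularity of
`wᵐ cot (π w / T)` at `w = 0` is removable since `m ≥ 1`; the value of the integrand at
the single point `τ = 0` does not affect the integral.) -/
theorem segInt_pow_mul_cot_add_sgn_bounded (T : ℝ) (hT : 0 < T) (m : ℕ) (hm : 1 ≤ m)
    (σ₁ : ℝ) :
    ∃ M : ℝ, 0 < M ∧ ∀ t : ℝ, 1 ≤ |t| →
      ‖segInt
          (fun w => w ^ m * (Complex.cot ((Real.pi : ℂ) * w / (T : ℂ))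
            + Complex.I * ((t / |t| : ℝ) : ℂ)))
          0 ((σ₁ : ℂ) + (t : ℂ) * Complex.I)‖ ≤ M := by
  obtain ⟨k, rfl⟩ : ∃ k, m = k + 1 := ⟨m - 1, (Nat.succ_pred_eq_of_pos hm).symm⟩
  have hπ : (0:ℝ) < Real.pi := Real.pi_pos
  refine ⟨2 * (2*(k:ℝ)+2)^k * (T/Real.pi)^(k+2) * (|σ₁|+1)^(k+2), by positivity, ?_⟩
  intro t ht
  have htpos : (0:ℝ) < |t| := lt_of_lt_of_le one_pos ht
  have ht0 : t ≠ 0 := fun h => by simp [h] at htpos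
  set s : ℂ := (σ₁:ℂ) + (t:ℂ) * Complex.I with hs
  have hsim : s.im = t := by rw [hs]; simp
  have hsabs : ‖s‖ ≤ (|σ₁|+1) * |t| := by
    rw [hs]
    calc ‖(σ₁:ℂ) + (t:ℂ)*Complex.I‖
        ≤ ‖(σ₁:ℂ)‖ + ‖(t:ℂ)*Complex.I‖ := norm_add_le _ _
      _ = |σ₁| + |t| := by simp
      _ ≤ (|σ₁|+1) * |t| := by nlinarith [abs_nonneg σ₁]
  clear_value s
  obtain ⟨a, ha_def⟩ : ∃ a : ℝ, a = Real.pi * |t| / T := ⟨_, rfl⟩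
  have ha : 0 < a := by rw [ha_def]; positivity
  obtain ⟨S, hS⟩ : ∃ S : ℝ, S = ‖s‖ := ⟨_, rfl⟩
  have hSpos : 0 ≤ S := hS ▸ norm_nonneg s
  have hSle : S ≤ (|σ₁|+1) * |t| := hS ▸ hsabs
  have hainv : a⁻¹ = T/(Real.pi*|t|) := by rw [ha_def]; field_simp
  obtain ⟨Cb, hCb⟩ : ∃ Cb : ℝ, Cb = (2*(k:ℝ)+2)^k * S^(k+2) * (a⁻¹)^(k+1) := ⟨_, rfl⟩
  have hCbpos : 0 ≤ Cb := by rw [hCb]; positivity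
  rw [segInt]
  have hbd := intervalIntegral.norm_integral_le_abs_of_norm_le
    (μ := MeasureTheory.volume) (a := (0:ℝ)) (b := 1)
    (f := fun τ : ℝ => ((0:ℂ) + (τ:ℂ) * (s - 0)) ^ (k+1) *
        (Complex.cot ((Real.pi : ℂ) * ((0:ℂ) + (τ:ℂ) * (s - 0)) / (T:ℂ))
          + Complex.I * ((t / |t| : ℝ) : ℂ)) * (s - 0))
    (g := fun τ : ℝ => Cb * Real.exp (-(a/2) * τ)) ?_ ?_
  · refine le_trans hbd ?_
    rw [intervalIntegral.integral_const_mul, abs_mul, abs_of_nonneg hCbpos]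
    have hI0 : 0 ≤ ∫ τ in (0:ℝ)..1, Real.exp (-(a/2)*τ) := by
      apply intervalIntegral.integral_nonneg (by norm_num)
      intro τ _
      positivity
    rw [abs_of_nonneg hI0]
    calc Cb * ∫ τ in (0:ℝ)..1, Real.exp (-(a/2)*τ)
        ≤ Cb * (2/a) := mul_le_mul_of_nonneg_left (exp_integral_le ha) hCbpos
      _ = 2 * (2*(k:ℝ)+2)^k * (S * a⁻¹)^(k+2) := by
          rw [hCb, mul_pow]
          field_simp
          have h1 : a * a⁻¹ = 1 := mul_inv_cancel₀ (ne_of_gt ha)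
          linear_combination (-(S^2*S^k*a⁻¹*a⁻¹^k)) * h1
      _ ≤ 2 * (2*(k:ℝ)+2)^k * ((|σ₁|+1) * (T/Real.pi))^(k+2) := by
          apply mul_le_mul_of_nonneg_left _ (by positivity)
          apply pow_le_pow_left₀ (by positivity)
          calc S * a⁻¹ ≤ ((|σ₁|+1) * |t|) * a⁻¹ := by
                apply mul_le_mul_of_nonneg_right hSle (by positivity)
            _ = (|σ₁|+1) * (T/Real.pi) := by
                rw [hainv]
                field_simp
      _ = 2 * (2*(k:ℝ)+2)^k * (T/Real.pi)^(k+2) * (|σ₁|+1)^(k+2) := by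
          rw [mul_pow]; ring
  · -- pointwise bound
    rw [Set.uIoc_of_le (by norm_num : (0:ℝ) ≤ 1)]
    filter_upwards [MeasureTheory.ae_restrict_mem measurableSet_Ioc] with τ hτ
    obtain ⟨hτ0, hτ1⟩ := hτ
    have hτne : τ ≠ 0 := ne_of_gt hτ0
    simp only [zero_add, sub_zero]
    set z : ℂ := (Real.pi : ℂ) * ((τ:ℂ) * s) / (T:ℂ) with hz_def
    have hz : z = ((Real.pi * τ / T : ℝ):ℂ) * s := by rw [hz_def]; push_cast; ring
    have him : z.im = Real.pi * τ / T * t := by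
      rw [hz]
      simp [Complex.mul_im, hsim]
    have hx : |z.im| = a * τ := by
      rw [him, abs_mul, abs_of_pos (by positivity : (0:ℝ) < Real.pi * τ / T), ha_def]
      field_simp
    have hxpos : 0 < a * τ := by positivity
    have hcot : ‖Complex.cot z + Complex.I * ((t / |t| : ℝ) : ℂ)‖ ≤
        2 / (Real.exp (2*(a*τ)) - 1) := by
      rcases lt_or_gt_of_ne ht0 with hneg | hpos
      · have hsgn : (t / |t| : ℝ) = -1 := by
          rw [abs_of_neg hneg]; field_simp
        have himneg : z.im < 0 := by
          rw [him]
          have h1 : (0:ℝ) < Real.pi * τ / T := by positivity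
          nlinarith
        have hb := cot_sub_I_bound himneg
        rw [hsgn]
        push_cast
        rw [show Complex.cot z + Complex.I * (-1) = Complex.cot z - Complex.I by ring]
        convert hb using 4
        rw [← hx, abs_of_neg himneg]
        ring
      · have hsgn : (t / |t| : ℝ) = 1 := by
          rw [abs_of_pos hpos]; field_simp
        have himpos : 0 < z.im := by
          rw [him]
          have h1 : (0:ℝ) < Real.pi * τ / T := by positivity
          nlinarith
        have hb := cot_add_I_bound himpos
        rw [hsgn]
        push_cast
        rw [mul_one]
        convert hb using 4
        rw [← hx, abs_of_pos himpos]
    have hky := real_key k hxpos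
    calc ‖((τ:ℂ) * s) ^ (k+1) * (Complex.cot z + Complex.I * ((t / |t| : ℝ) : ℂ)) * s‖
        = τ^(k+1) * S^(k+1) *
            ‖Complex.cot z + Complex.I * ((t / |t| : ℝ) : ℂ)‖ * S := by
          rw [norm_mul, norm_mul, norm_pow, norm_mul, Complex.norm_real, Real.norm_eq_abs,
            abs_of_pos hτ0, ← hS, mul_pow]
      _ ≤ τ^(k+1) * S^(k+1) *
            ((2*(k:ℝ)+2)^k / (a*τ)^(k+1) * Real.exp (-(a*τ/2))) * S := by
          apply mul_le_mul_of_nonneg_right _ hSpos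
          exact mul_le_mul_of_nonneg_left (hcot.trans hky) (by positivity)
      _ = Cb * Real.exp (-(a/2) * τ) := by
          rw [hCb, show -(a*τ/2) = -(a/2)*τ by ring]
          have hane : a ≠ 0 := ne_of_gt ha
          field_simp
          have h1 : a * a⁻¹ = 1 := mul_inv_cancel₀ hane
          have h2 : a ^ k * a⁻¹ ^ k = 1 := by rw [← mul_pow, h1, one_pow]
          linear_combination (-(τ * τ ^ k * S ^ 2 * S ^ k)) * (a^k*a⁻¹^k * h1 + h2)
  · exact (continuous_const.mul (Real.continuous_exp.comp
      (continuous_const.mul continuous_id))).intervalIntegrable 0 1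
end

section
/- Let n be an even positive integer, T > 0, let P(w) = Σ_{k=0}^{n/2−1} p_k w^{n−2k−1} be an odd polynomial with real coefficients p_k, and fix σ₁ < 0. Then there exist constants C > 0 and t₀ ≥ 1 such that for all real t with |t| ≥ t₀, | ∫_{[0, σ₁+it]} P(w) tan(πw/T) dw − i·sgn(t)·Σ_{k=0}^{n/2−1} p_k (σ₁+it)^{n−2k}/(n−2k) | ≤ C. (Expanding (σ₁+it)^{n−2k} by the binomial theorem, the main term equals Σ_k p_k sgn(t)·(i/(n−2k))·Σ_{l=0}^{n/2−k} C(n−2k,2l)(−1)^l σ₁^{n−2k−2l} t^{2l} + Σ_k p_k (1/(n−2k))·Σ_{l=1}^{n/2−k} C(n−2k,2l−1)(−1)^l σ₁^{n−2k−2l+1} |t|^{2l−1}.) -/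
open Complex Real intervalIntegral

lemma pow_mul_exp_neg_le {x : ℝ} (hx : 0 ≤ x) (m : ℕ) :
    x ^ m * Real.exp (-x) ≤ (m.factorial : ℝ) := by
  have h1 : x ^ m / (m.factorial : ℝ) ≤ Real.exp x := Real.pow_div_factorial_le_exp x hx m
  have hm : (0:ℝ) < (m.factorial : ℝ) := by exact_mod_cast Nat.factorial_pos m
  have h2 : x ^ m ≤ Real.exp x * (m.factorial : ℝ) := by
    rw [div_le_iff₀ hm] at h1; linarith
  rw [Real.exp_neg]
  rw [mul_inv_le_iff₀ (Real.exp_pos x)]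
  linarith [h2]

lemma integral_exp_neg_mul_le {c : ℝ} (hc : 0 < c) :
    ∫ τ in (0:ℝ)..1, Real.exp (-(c * τ)) ≤ 1 / c := by
  have h1 : ∫ τ in (0:ℝ)..1, Real.exp (-(c * τ))
      = c⁻¹ * ∫ x in (c*0:ℝ)..(c*1), Real.exp (-x) := by
    rw [← mul_integral_comp_mul_left (f := fun x => Real.exp (-x)) (c := c)]
    field_simp
  rw [h1]
  have h2 : ∫ x in (c*0:ℝ)..(c*1), Real.exp (-x) = 1 - Real.exp (-c) := by
    rw [mul_zero, mul_one]
    rw [intervalIntegral.integral_comp_neg (fun x => Real.exp x)]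
    rw [integral_exp]
    simp
  rw [h2, one_div]
  have := Real.exp_pos (-c)
  have hinv : (0:ℝ) < c⁻¹ := by positivity
  nlinarith

lemma integral_cpow_nat (m : ℕ) :
    ∫ τ in (0:ℝ)..1, ((τ:ℂ)) ^ m = 1 / ((m:ℂ) + 1) := by
  have h1 : ∀ τ : ℝ, ((τ:ℂ)) ^ m = ((τ ^ m : ℝ) : ℂ) := by intro τ; push_cast; ring
  simp_rw [h1]
  rw [intervalIntegral.integral_ofReal, integral_pow]
  push_cast
  norm_num

lemma tan_sub_I_bound {z : ℂ} (hcos : Complex.cos z ≠ 0)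
    (h : 0 ≤ Real.cos (2 * z.re) ∨ Real.exp (-(2 * z.im)) ≤ 1/2) :
    ‖Complex.tan z - Complex.I‖ ≤ 4 * Real.exp (-(2 * z.im)) := by
  set u := Complex.exp (z * Complex.I) with hu
  set v := Complex.exp (-z * Complex.I) with hv
  have huv : u * v = 1 := by rw [hu, hv, ← Complex.exp_add]; simp
  have hsin : Complex.sin z - Complex.I * Complex.cos z = -Complex.I * u := by
    rw [Complex.sin, Complex.cos]; ring
  have hcosf : Complex.cos z = v * (1 + u * u) / 2 := by
    rw [Complex.cos]; linear_combination (-(u : ℂ)/2) * huv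
  have key : Complex.tan z - Complex.I = -Complex.I * u / Complex.cos z := by
    rw [Complex.tan_eq_sin_div_cos, ← hsin]; field_simp
  have hune : (1 : ℂ) + u * u ≠ 0 := by
    intro h0; apply hcos; rw [hcosf, h0]; ring
  have habsu : ‖u‖ = Real.exp (-z.im) := by
    rw [hu, Complex.norm_exp]; congr 1; simp
  have habsv : ‖v‖ = Real.exp z.im := by
    rw [hv, Complex.norm_exp]; congr 1; simp
  have h1 : ‖u * u‖ = Real.exp (-(2*z.im)) := by
    rw [norm_mul, habsu, ← Real.exp_add]; ring_nf
  have hlow : 1/2 ≤ ‖1 + u * u‖ := by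
    rcases h with h | h
    · have huu : u * u = Complex.exp (2 * Complex.I * z) := by
        rw [hu, ← Complex.exp_add]; ring_nf
      have hre : (1 + u * u).re = 1 + Real.exp (-(2*z.im)) * Real.cos (2*z.re) := by
        rw [Complex.add_re, huu, Complex.exp_re]
        simp [Complex.mul_re, Complex.mul_im]
      have hmul : 0 ≤ Real.exp (-(2*z.im)) * Real.cos (2*z.re) :=
        mul_nonneg (Real.exp_pos _).le h
      calc (1:ℝ)/2 ≤ (1 + u * u).re := by rw [hre]; linarith
        _ ≤ ‖1 + u * u‖ := Complex.re_le_norm _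
    · calc (1:ℝ)/2 ≤ 1 - ‖u*u‖ := by rw [h1]; linarith
        _ ≤ ‖1 + u * u‖ := by
            have := norm_sub_norm_le (1 : ℂ) (-(u*u))
            simpa [sub_neg_eq_add] using this
  have hfin : ‖Complex.tan z - Complex.I‖
      = 2 * Real.exp (-z.im) / (Real.exp z.im * ‖1 + u*u‖) := by
    rw [key, norm_div, norm_mul, hcosf, norm_div, norm_mul, habsu, habsv]
    simp [Complex.norm_I]
    ring
  rw [hfin]
  have hinv : Real.exp (-z.im) * Real.exp z.im = 1 := by rw [← Real.exp_add]; simp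
  have h4 : 4 * Real.exp (-(2*z.im)) = 2 * Real.exp (-z.im) / (Real.exp z.im * (1/2)) := by
    rw [eq_div_iff (by positivity)]
    rw [show (-(2*z.im)) = -z.im + -z.im by ring, Real.exp_add]
    linear_combination (2 * Real.exp (-z.im)) * hinv
  rw [h4]
  apply div_le_div_of_nonneg_left (by positivity) (by positivity)
  have := Real.exp_pos z.im
  nlinarith

lemma tan_sub_I_sgn_bound {z : ℂ} {ε : ℝ}
    (hε : (ε = 1 ∧ 0 ≤ z.im) ∨ (ε = -1 ∧ z.im ≤ 0))
    (hcos : Complex.cos z ≠ 0)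
    (h : 0 ≤ Real.cos (2 * z.re) ∨ Real.exp (-(2 * |z.im|)) ≤ 1/2) :
    ‖Complex.tan z - Complex.I * (ε:ℂ)‖ ≤ 4 * Real.exp (-(2 * |z.im|)) := by
  rcases hε with ⟨hε, him⟩ | ⟨hε, him⟩
  · rw [hε]
    rw [_root_.abs_of_nonneg him] at h ⊢
    simpa using tan_sub_I_bound hcos h
  · rw [hε]
    rw [_root_.abs_of_nonpos him] at h ⊢
    have h2 : Complex.tan z - Complex.I * ((-1:ℝ):ℂ) = -(Complex.tan (-z) - Complex.I) := by
      rw [Complex.tan_neg]; push_cast; ring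
    rw [h2, norm_neg]
    have hc2 : Complex.cos (-z) ≠ 0 := by rw [Complex.cos_neg]; exact hcos
    have h3 := tan_sub_I_bound hc2 (by
      rcases h with h | h
      · left
        rw [Complex.neg_re, ← Real.cos_neg]
        convert h using 2
        ring
      · right
        rw [Complex.neg_im]
        convert h using 3)
    simpa [Complex.neg_im] using h3

theorem segInt_poly_tan_asymptotic_aux : True := trivial

set_option maxHeartbeats 2000000 in
/-- Let `n` be an even positive integer, `T > 0`,
`P w = Σ_{k=0}^{n/2-1} p_k w^{n-2k-1}` an odd polynomial with real coefficients, and fix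
`σ₁ < 0`.  Then there exist `C > 0` and `t₀ ≥ 1` such that for all real `t` with
`|t| ≥ t₀`,
`|∫_{[0, σ₁+it]} P w · tan (π w / T) dw - i sgn t · Σ_k p_k (σ₁+it)^{n-2k}/(n-2k)| ≤ C`. -/
theorem segInt_poly_tan_asymptotic (n : ℕ) (hn : 0 < n) (hne : Even n)
    (T : ℝ) (hT : 0 < T) (p : ℕ → ℝ) (σ₁ : ℝ) (hσ₁ : σ₁ < 0) :
    ∃ C t₀ : ℝ, 0 < C ∧ 1 ≤ t₀ ∧ ∀ t : ℝ, t₀ ≤ |t| →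
      ‖segInt
          (fun w => (∑ k ∈ Finset.range (n / 2), (p k : ℂ) * w ^ (n - 2 * k - 1)) *
            Complex.tan ((Real.pi : ℂ) * w / (T : ℂ)))
          0 ((σ₁ : ℂ) + (t : ℂ) * Complex.I)
        - Complex.I * ((t / |t| : ℝ) : ℂ) *
            ∑ k ∈ Finset.range (n / 2),
              (p k : ℂ) * ((σ₁ : ℂ) + (t : ℂ) * Complex.I) ^ (n - 2 * k) /
                ((n - 2 * k : ℕ) : ℂ)‖ ≤ C := by
  have ha : (0:ℝ) < Real.pi / T := div_pos Real.pi_pos hT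
  set a : ℝ := Real.pi / T with ha_def
  have haT : a * T = Real.pi := div_mul_cancel₀ _ (ne_of_gt hT)
  set τs : ℝ := min 1 (T / (4 * (-σ₁))) with hτs_def
  have hτs_pos : 0 < τs := lt_min one_pos (div_pos hT (by linarith))
  set b : ℝ := 1 - σ₁ with hb_def
  have hb1 : (1:ℝ) ≤ b := by rw [hb_def]; linarith
  have hb0 : (0:ℝ) < b := by linarith
  set K0 : ℝ := ∑ k ∈ Finset.range (n/2),
      4 * |p k| * b ^ (n - 2*k) * (((n - 2*k - 1).factorial : ℝ)) / a ^ (n - 2*k - 1)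
      with hK0_def
  have hK0 : 0 ≤ K0 := Finset.sum_nonneg (fun k _ => by positivity)
  have hdvd : 2 * (n/2) = n := Nat.two_mul_div_two_of_even hne
  refine ⟨K0 / a + 1, max 1 (T / τs), by have := div_nonneg hK0 ha.le; linarith, le_max_left _ _, ?_⟩
  intro t ht
  have ht1 : (1:ℝ) ≤ |t| := le_trans (le_max_left _ _) ht
  have htpos : (0:ℝ) < |t| := by linarith
  have htne : t ≠ 0 := by simpa using htpos.ne'
  have htT : T / τs ≤ |t| := le_trans (le_max_right _ _) ht
  set s : ℂ := (σ₁ : ℂ) + (t : ℂ) * Complex.I with hs_def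
  have hs_re : s.re = σ₁ := by simp [hs_def]
  have hs_im : s.im = t := by simp [hs_def]
  have habs_s : ‖s‖ ≤ b * |t| := by
    calc ‖s‖ ≤ ‖(σ₁:ℂ)‖ + ‖(t:ℂ)*Complex.I‖ :=
          norm_add_le _ _
      _ = |σ₁| + |t| := by simp [Complex.norm_real]
      _ ≤ b * |t| := by rw [_root_.abs_of_neg hσ₁]; nlinarith
  set Z : ℝ → ℂ := fun τ => (Real.pi : ℂ) * ((τ:ℂ) * s) / (T : ℂ) with hZ_def
  have hZ : ∀ τ : ℝ, Z τ = ((a:ℝ):ℂ) * ((τ:ℂ) * s) := by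
    intro τ
    rw [hZ_def, ha_def]
    push_cast
    have : (T:ℂ) ≠ 0 := by exact_mod_cast (ne_of_gt hT)
    field_simp
  have hZim : ∀ τ : ℝ, (Z τ).im = a * (τ * t) := by
    intro τ
    rw [hZ]
    simp [Complex.mul_im, Complex.mul_re, hs_im, hs_re]
  have hZre : ∀ τ : ℝ, (Z τ).re = a * (τ * σ₁) := by
    intro τ
    rw [hZ]
    simp [Complex.mul_im, Complex.mul_re, hs_im, hs_re]
  have hcosZ : ∀ τ : ℝ, τ ∈ Set.uIcc (0:ℝ) 1 → Complex.cos (Z τ) ≠ 0 := by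
    intro τ hτ
    rcases eq_or_ne τ 0 with rfl | hτ0
    · rw [hZ]; simp
    · intro hc
      rw [Complex.cos_eq_zero_iff] at hc
      obtain ⟨k, hk⟩ := hc
      have him : (Z τ).im = 0 := by rw [hk]; simp
      rw [hZim] at him
      have : τ * t = 0 := by
        rcases mul_eq_zero.mp him with h | h
        · exact absurd h (ne_of_gt ha)
        · exact h
      rcases mul_eq_zero.mp this with h | h
      · exact hτ0 h
      · exact htne h
  -- the two integrands
  set P : ℝ → ℂ := fun τ => ∑ k ∈ Finset.range (n/2), (p k : ℂ) * ((τ:ℂ) * s) ^ (n - 2*k - 1)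
    with hP_def
  set F : ℝ → ℂ := fun τ => P τ * Complex.tan (Z τ) * s with hF_def
  set G : ℝ → ℂ := fun τ => P τ * (Complex.I * ((t / |t| : ℝ) : ℂ)) * s with hG_def
  have hPcont : Continuous P := by
    apply continuous_finset_sum
    intro k _
    fun_prop
  have hFint : IntervalIntegrable F MeasureTheory.volume 0 1 := by
    apply ContinuousOn.intervalIntegrable
    apply ContinuousOn.mul
    apply ContinuousOn.mul hPcont.continuousOn
    · have : ∀ τ : ℝ, Complex.tan (Z τ) = Complex.sin (Z τ) / Complex.cos (Z τ) :=
        fun τ => Complex.tan_eq_sin_div_cos _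
      simp only [this]
      exact ContinuousOn.div
        (Continuous.continuousOn (by fun_prop))
        (Continuous.continuousOn (by fun_prop)) hcosZ
    · exact continuousOn_const
  have hGint : IntervalIntegrable G MeasureTheory.volume 0 1 := by
    apply Continuous.intervalIntegrable
    fun_prop
  have hseg : segInt
      (fun w => (∑ k ∈ Finset.range (n / 2), (p k : ℂ) * w ^ (n - 2 * k - 1)) *
        Complex.tan ((Real.pi : ℂ) * w / (T : ℂ))) 0 s
      = ∫ τ in (0:ℝ)..1, F τ := by
    rw [segInt]
    congr 1
    funext τ
    simp only [hF_def, hP_def, hZ_def, zero_add, sub_zero]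
  have hGval : ∫ τ in (0:ℝ)..1, G τ
      = Complex.I * ((t / |t| : ℝ) : ℂ) *
          ∑ k ∈ Finset.range (n / 2), (p k : ℂ) * s ^ (n - 2 * k) / ((n - 2 * k : ℕ) : ℂ) := by
    have hGsum : ∀ τ : ℝ, G τ = ∑ k ∈ Finset.range (n/2),
        ((p k : ℂ) * s ^ (n - 2*k - 1) * (Complex.I * ((t / |t| : ℝ) : ℂ)) * s) *
          ((τ:ℂ)) ^ (n - 2*k - 1) := by
      intro τ
      simp only [hG_def, hP_def]
      rw [Finset.sum_mul, Finset.sum_mul]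
      refine Finset.sum_congr rfl fun k _ => ?_
      rw [mul_pow]
      ring
    calc ∫ τ in (0:ℝ)..1, G τ
        = ∫ τ in (0:ℝ)..1, ∑ k ∈ Finset.range (n/2),
            ((p k : ℂ) * s ^ (n - 2*k - 1) * (Complex.I * ((t / |t| : ℝ) : ℂ)) * s) *
              ((τ:ℂ)) ^ (n - 2*k - 1) := by simp only [hGsum]
      _ = ∑ k ∈ Finset.range (n/2), ∫ τ in (0:ℝ)..1,
            ((p k : ℂ) * s ^ (n - 2*k - 1) * (Complex.I * ((t / |t| : ℝ) : ℂ)) * s) *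
              ((τ:ℂ)) ^ (n - 2*k - 1) := by
          apply intervalIntegral.integral_finset_sum
          intro k _
          apply Continuous.intervalIntegrable
          fun_prop
      _ = ∑ k ∈ Finset.range (n/2),
            ((p k : ℂ) * s ^ (n - 2*k - 1) * (Complex.I * ((t / |t| : ℝ) : ℂ)) * s) *
              (1 / (((n - 2*k - 1 : ℕ):ℂ) + 1)) := by
          refine Finset.sum_congr rfl fun k _ => ?_
          rw [intervalIntegral.integral_const_mul, integral_cpow_nat]
      _ = Complex.I * ((t / |t| : ℝ) : ℂ) *
          ∑ k ∈ Finset.range (n / 2), (p k : ℂ) * s ^ (n - 2 * k) / ((n - 2 * k : ℕ) : ℂ) := by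
          rw [Finset.mul_sum]
          refine Finset.sum_congr rfl fun k hk => ?_
          rw [Finset.mem_range] at hk
          have hk2 : 2*k + 2 ≤ n := by omega
          have h1 : n - 2*k - 1 + 1 = n - 2*k := by omega
          have h2 : s ^ (n - 2*k) = s ^ (n - 2*k - 1) * s := by rw [← pow_succ, h1]
          have h3 : ((n - 2*k : ℕ):ℂ) = ((n - 2*k - 1 : ℕ):ℂ) + 1 := by
            rw [← h1]; push_cast; ring
          have h4 : ((n - 2*k - 1 : ℕ):ℂ) + 1 ≠ 0 := Nat.cast_add_one_ne_zero _
          rw [h2, h3]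
          field_simp
  have key : ‖(∫ τ in (0:ℝ)..1, F τ) - ∫ τ in (0:ℝ)..1, G τ‖ ≤ K0 / a := by
    set c : ℝ := a * |t| with hc_def
    have hc : 0 < c := mul_pos ha htpos
    have hpt : ∀ τ : ℝ, 0 ≤ τ → τ ≤ 1 →
        ‖F τ - G τ‖ ≤ (K0 * |t|) * Real.exp (-(c * τ)) := by
      intro τ hτ0 hτ1
      have hFG : F τ - G τ
          = P τ * (Complex.tan (Z τ) - Complex.I * ((t / |t| : ℝ) : ℂ)) * s := by
        simp only [hF_def, hG_def]; ring
      rw [hFG, norm_mul, norm_mul]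
      have habsim : |(Z τ).im| = c * τ := by
        rw [hZim, abs_mul, abs_mul, _root_.abs_of_nonneg ha.le, _root_.abs_of_nonneg hτ0]
        rw [hc_def]; ring
      have htan : ‖Complex.tan (Z τ) - Complex.I * ((t / |t| : ℝ) : ℂ)‖
          ≤ 4 * Real.exp (-(2 * (c * τ))) := by
        have hmem : τ ∈ Set.uIcc (0:ℝ) 1 := by
          rw [Set.uIcc_of_le zero_le_one]; exact ⟨hτ0, hτ1⟩
        have hsgn : ((t / |t| : ℝ) = 1 ∧ 0 ≤ (Z τ).im) ∨
            ((t / |t| : ℝ) = -1 ∧ (Z τ).im ≤ 0) := by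
          rcases lt_or_gt_of_ne htne with hlt | hgt
          · right
            constructor
            · rw [abs_of_neg hlt]; field_simp
            · rw [hZim]; nlinarith [mul_nonneg ha.le hτ0]
          · left
            constructor
            · rw [abs_of_pos hgt]; field_simp
            · rw [hZim]; nlinarith [mul_nonneg ha.le hτ0]
        have hdisj : 0 ≤ Real.cos (2 * (Z τ).re) ∨
            Real.exp (-(2 * |(Z τ).im|)) ≤ 1/2 := by
          rcases le_or_gt τ τs with hττs | hττs
          · left
            rw [hZre]
            apply Real.cos_nonneg_of_mem_Icc
            have h5 : τ ≤ T / (4 * (-σ₁)) := le_trans hττs (min_le_right _ _)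
            have h6 : τ * (-σ₁) ≤ T / 4 := by
              have h61 : τ * (-σ₁) ≤ (T / (4 * (-σ₁))) * (-σ₁) :=
                mul_le_mul_of_nonneg_right h5 (by linarith)
              have hσne : σ₁ ≠ 0 := ne_of_lt hσ₁
              have h62 : (T / (4 * (-σ₁))) * (-σ₁) = T / 4 := by
                field_simp
              linarith
            constructor
            · have h63 : 2 * a * (τ * (-σ₁)) ≤ 2 * a * (T / 4) :=
                mul_le_mul_of_nonneg_left h6 (by linarith)
              have h64 : 2 * a * (T / 4) = Real.pi / 2 := by
                rw [show 2 * a * (T/4) = (a*T)/2 by ring, haT]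
              nlinarith
            · nlinarith [Real.pi_pos, mul_nonneg hτ0 (neg_nonneg.mpr hσ₁.le),
                mul_nonneg ha.le (mul_nonneg hτ0 (neg_nonneg.mpr hσ₁.le))]
          · right
            rw [habsim]
            have h7 : T ≤ τs * |t| := by
              rw [div_le_iff₀ hτs_pos] at htT; linarith
            have h81 : c * τs ≤ c * τ := mul_le_mul_of_nonneg_left hττs.le hc.le
            have h82 : a * T ≤ a * (τs * |t|) := mul_le_mul_of_nonneg_left h7 ha.le
            have h83 : a * (τs * |t|) = c * τs := by rw [hc_def]; ring
            have h84 : (1:ℝ) ≤ 2 * (c * τ) := by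
              have := Real.pi_gt_three
              nlinarith
            have h85 : (2:ℝ) ≤ Real.exp (2 * (c * τ)) := by
              have := Real.add_one_le_exp (2 * (c * τ))
              linarith
            calc Real.exp (-(2 * (c * τ))) = (Real.exp (2 * (c * τ)))⁻¹ := Real.exp_neg _
              _ ≤ 2⁻¹ := by
                  apply inv_anti₀ (by norm_num) h85
              _ = 1/2 := by norm_num
        have h := tan_sub_I_sgn_bound hsgn (hcosZ τ hmem) hdisj
        rw [habsim] at h
        exact h
      have hpoly : ‖P τ‖
          ≤ ∑ k ∈ Finset.range (n/2), |p k| * (τ * (b * |t|)) ^ (n - 2*k - 1) := by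
        simp only [hP_def]
        refine le_trans (norm_sum_le _ _) ?_
        apply Finset.sum_le_sum
        intro k _
        rw [norm_mul, norm_pow, norm_mul, Complex.norm_real, Real.norm_eq_abs, Complex.norm_real, Real.norm_eq_abs,
          _root_.abs_of_nonneg hτ0]
        gcongr
      calc ‖P τ‖ *
            ‖Complex.tan (Z τ) - Complex.I * ((t / |t| : ℝ) : ℂ)‖ *
            ‖s‖
          ≤ (∑ k ∈ Finset.range (n/2), |p k| * (τ * (b * |t|)) ^ (n - 2*k - 1)) *
              (4 * Real.exp (-(2 * (c * τ)))) * (b * |t|) := by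
            apply mul_le_mul (mul_le_mul hpoly htan (norm_nonneg _)
              (Finset.sum_nonneg fun k _ => by positivity)) habs_s (norm_nonneg _)
              (mul_nonneg (Finset.sum_nonneg fun k _ => by positivity) (by positivity))
        _ = ∑ k ∈ Finset.range (n/2),
              |p k| * (τ * (b * |t|)) ^ (n - 2*k - 1) *
                (4 * Real.exp (-(2 * (c * τ)))) * (b * |t|) := by
            rw [Finset.sum_mul, Finset.sum_mul]
        _ ≤ ∑ k ∈ Finset.range (n/2),
              (4 * |p k| * b ^ (n - 2*k) * (((n - 2*k - 1).factorial : ℝ)) / a ^ (n - 2*k - 1)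
                * |t|) * Real.exp (-(c * τ)) := by
            apply Finset.sum_le_sum
            intro k hk
            rw [Finset.mem_range] at hk
            have hk2 : 2*k + 2 ≤ n := by omega
            have h1 : n - 2*k = (n - 2*k - 1) + 1 := by omega
            set m : ℕ := n - 2*k - 1 with hm_def
            rw [h1]
            have hkey : (c * τ) ^ m * Real.exp (-(c * τ)) ≤ (m.factorial : ℝ) :=
              pow_mul_exp_neg_le (by positivity) m
            have h2 : (|t| * τ) ^ m * Real.exp (-(c * τ)) ≤ (m.factorial : ℝ) / a ^ m := by
              rw [le_div_iff₀ (pow_pos ha m)]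
              calc (|t| * τ) ^ m * Real.exp (-(c * τ)) * a ^ m
                  = (c * τ) ^ m * Real.exp (-(c * τ)) := by
                    rw [show c * τ = a * (|t| * τ) by rw [hc_def]; ring, mul_pow]
                    ring
                _ ≤ (m.factorial : ℝ) := hkey
            have hexp2 : Real.exp (-(2 * (c * τ)))
                = Real.exp (-(c * τ)) * Real.exp (-(c * τ)) := by
              rw [← Real.exp_add]; ring_nf
            calc |p k| * (τ * (b * |t|)) ^ m * (4 * Real.exp (-(2 * (c * τ)))) * (b * |t|)
                = (4 * |p k| * b ^ (m+1) * |t|) *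
                    ((|t| * τ) ^ m * Real.exp (-(c * τ))) * Real.exp (-(c * τ)) := by
                  rw [hexp2, mul_pow τ (b * |t|), mul_pow b (|t|), mul_pow (|t|) τ, pow_succ]
                  ring
              _ ≤ (4 * |p k| * b ^ (m+1) * |t|) *
                    ((m.factorial : ℝ) / a ^ m) * Real.exp (-(c * τ)) := by
                  gcongr
              _ = (4 * |p k| * b ^ (m+1) * ((m.factorial : ℝ)) / a ^ m * |t|) *
                    Real.exp (-(c * τ)) := by ring
        _ = (K0 * |t|) * Real.exp (-(c * τ)) := by
            rw [hK0_def, Finset.sum_mul, Finset.sum_mul]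
    have hbound_int : IntervalIntegrable (fun τ => (K0 * |t|) * Real.exp (-(c * τ)))
        MeasureTheory.volume 0 1 := by
      apply Continuous.intervalIntegrable
      fun_prop
    have hnonneg : 0 ≤ ∫ τ in (0:ℝ)..1, (K0 * |t|) * Real.exp (-(c * τ)) := by
      apply intervalIntegral.integral_nonneg zero_le_one
      intro τ _
      positivity
    calc ‖(∫ τ in (0:ℝ)..1, F τ) - ∫ τ in (0:ℝ)..1, G τ‖
        = ‖∫ τ in (0:ℝ)..1, (F τ - G τ)‖ := by
          rw [intervalIntegral.integral_sub hFint hGint]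
      _ ≤ |∫ τ in (0:ℝ)..1, (K0 * |t|) * Real.exp (-(c * τ))| := by
          refine le_trans (intervalIntegral.norm_integral_le_of_norm_le zero_le_one ?_ hbound_int) (le_abs_self _)
          filter_upwards with τ hτ
          exact hpt τ hτ.1.le hτ.2
      _ = ∫ τ in (0:ℝ)..1, (K0 * |t|) * Real.exp (-(c * τ)) := abs_of_nonneg hnonneg
      _ = (K0 * |t|) * ∫ τ in (0:ℝ)..1, Real.exp (-(c * τ)) := by
          rw [intervalIntegral.integral_const_mul]
      _ ≤ (K0 * |t|) * (1 / c) :=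
          mul_le_mul_of_nonneg_left (integral_exp_neg_mul_le hc)
            (mul_nonneg hK0 htpos.le)
      _ = K0 / a := by rw [hc_def]; field_simp
  rw [hseg, ← hGval]
  calc ‖(∫ τ in (0:ℝ)..1, F τ) - ∫ τ in (0:ℝ)..1, G τ‖ ≤ K0 / a := key
    _ ≤ K0 / a + 1 := by linarith
end

section
/- Let n be an even positive integer, T > 0, and let P(w) = Σ_{k=0}^{n/2−1} p_k w^{n−2k−1} be an odd polynomial with real coefficients p_k. Then there exist constants C > 0 and t₀ ≥ 1 such that for all real t ≥ t₀, | Im ∫_{[0, it]} P(w) tan(πw/T) dw − Σ_{k=0}^{n/2−1} (−1)^{n/2−k} p_k t^{n−2k}/(n−2k) | ≤ C. -/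
lemma aux_continuous_tanh : Continuous Real.tanh := by
  have h : Real.tanh = fun x => Real.sinh x / Real.cosh x :=
    funext fun x => Real.tanh_eq_sinh_div_cosh x
  rw [h]
  exact Real.continuous_sinh.div Real.continuous_cosh fun x => (Real.cosh_pos x).ne'

lemma aux_tanh_bound (x : ℝ) :
    0 ≤ 1 - Real.tanh x ∧ 1 - Real.tanh x ≤ 2 * Real.exp (-(2*x)) := by
  have hc : 0 < Real.cosh x := Real.cosh_pos x
  have h1 : 1 - Real.tanh x = Real.exp (-x) / Real.cosh x := by
    rw [Real.tanh_eq_sinh_div_cosh, ← Real.cosh_sub_sinh]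
    field_simp
  constructor
  · rw [h1]; positivity
  · rw [h1]
    have h2 : Real.exp x / 2 ≤ Real.cosh x := by
      rw [Real.cosh_eq]; have := Real.exp_pos (-x); linarith
    have h3 : Real.exp (-x) / Real.cosh x ≤ Real.exp (-x) / (Real.exp x / 2) := by
      gcongr
    refine h3.trans (le_of_eq ?_)
    rw [div_eq_iff (by positivity)]
    rw [show (2:ℝ) * Real.exp (-(2*x)) * (Real.exp x / 2) = Real.exp (-(2*x)) * Real.exp x by ring,
      ← Real.exp_add]
    ring_nf

lemma aux_pow_exp (y c : ℝ) (hy : 0 ≤ y) (hc : 0 < c) (m : ℕ) :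
    y ^ m * Real.exp (-(2*(c*y))) ≤ (m.factorial : ℝ) * (c⁻¹)^m * Real.exp (-(c*y)) := by
  have h := Real.pow_div_factorial_le_exp (x := c*y) (by positivity) m
  have hy' : y ^ m = (c⁻¹)^m * (c*y)^m := by
    rw [← mul_pow]; field_simp
  have hcym : (c*y)^m ≤ (m.factorial : ℝ) * Real.exp (c*y) := by
    rw [div_le_iff₀ (by positivity)] at h
    linarith [h]
  calc y ^ m * Real.exp (-(2*(c*y)))
      = (c⁻¹)^m * ((c*y)^m * Real.exp (-(2*(c*y)))) := by rw [hy']; ring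
    _ ≤ (c⁻¹)^m * (((m.factorial : ℝ) * Real.exp (c*y)) * Real.exp (-(2*(c*y)))) := by
        gcongr
    _ = (m.factorial : ℝ) * (c⁻¹)^m * (Real.exp (c*y) * Real.exp (-(2*(c*y)))) := by ring
    _ = (m.factorial : ℝ) * (c⁻¹)^m * Real.exp (-(c*y)) := by
        rw [← Real.exp_add]; ring_nf

lemma aux_point_eq (n : ℕ) (hne : Even n) (T : ℝ) (hT : 0 < T) (p : ℕ → ℝ) (t τ : ℝ) :
    (∑ k ∈ Finset.range (n / 2), (p k : ℂ) * ((τ:ℂ) * ((t:ℂ) * Complex.I)) ^ (n - 2 * k - 1)) *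
        Complex.tan ((Real.pi : ℂ) * ((τ:ℂ) * ((t:ℂ) * Complex.I)) / (T : ℂ)) *
        ((t:ℂ) * Complex.I)
      = ((∑ k ∈ Finset.range (n / 2),
            (-1:ℝ)^(n/2 - k) * p k * t^(n - 2*k) * τ^(n - 2*k - 1) *
              Real.tanh (Real.pi * t * τ / T) : ℝ) : ℂ) * Complex.I := by
  obtain ⟨m, hm⟩ := hne
  have harg : (Real.pi : ℂ) * ((τ:ℂ) * ((t:ℂ) * Complex.I)) / (T : ℂ)
      = ((Real.pi * t * τ / T : ℝ) : ℂ) * Complex.I := by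
    have : (T:ℂ) ≠ 0 := by exact_mod_cast hT.ne'
    field_simp
    push_cast
    field_simp
  rw [harg, Complex.tan_mul_I, ← Complex.ofReal_tanh]
  set th := Real.tanh (Real.pi * t * τ / T) with hth
  push_cast
  rw [Finset.sum_mul, Finset.sum_mul, Finset.sum_mul]
  refine Finset.sum_congr rfl fun k hk => ?_
  rw [Finset.mem_range] at hk
  have hIpow : Complex.I ^ (n - 2*k - 1) * Complex.I = (-1:ℂ)^(n/2 - k) := by
    rw [← pow_succ]
    have h1 : n - 2*k - 1 + 1 = 2*(n/2 - k) := by omega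
    rw [h1, pow_mul, Complex.I_sq]
  have hmul : ((τ:ℂ) * ((t:ℂ) * Complex.I)) ^ (n - 2*k - 1)
      = ((τ:ℂ) * (t:ℂ)) ^ (n - 2*k - 1) * Complex.I ^ (n - 2*k - 1) := by
    rw [← mul_pow, mul_assoc]
  have hpow : (t:ℂ) ^ (n - 2*k) = (t:ℂ) ^ (n - 2*k - 1) * (t:ℂ) := by
    rw [← pow_succ]
    congr 1
    omega
  rw [hmul, hpow]
  linear_combination ((p k : ℂ) * ((τ:ℂ) * (t:ℂ))^(n - 2*k - 1) *
    (th : ℂ) * (t:ℂ) * Complex.I) * hIpow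

/-- Let `n` be an even positive integer, `T > 0`, and
`P w = Σ_{k=0}^{n/2-1} p_k w^{n-2k-1}` an odd polynomial with real coefficients.  Then
there exist `C > 0` and `t₀ ≥ 1` such that for all real `t ≥ t₀`,
`|Im ∫_{[0, it]} P w · tan (π w / T) dw - Σ_k (-1)^{n/2-k} p_k t^{n-2k}/(n-2k)| ≤ C`. -/
theorem im_segInt_poly_tan_asymptotic (n : ℕ) (hn : 0 < n) (hne : Even n)
    (T : ℝ) (hT : 0 < T) (p : ℕ → ℝ) :
    ∃ C t₀ : ℝ, 0 < C ∧ 1 ≤ t₀ ∧ ∀ t : ℝ, t₀ ≤ t →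
      |(segInt
          (fun w => (∑ k ∈ Finset.range (n / 2), (p k : ℂ) * w ^ (n - 2 * k - 1)) *
            Complex.tan ((Real.pi : ℂ) * w / (T : ℂ)))
          0 ((t : ℂ) * Complex.I)).im
        - ∑ k ∈ Finset.range (n / 2),
            (-1 : ℝ) ^ (n / 2 - k) * p k * t ^ (n - 2 * k) / ((n - 2 * k : ℕ) : ℝ)| ≤ C := by
  have hπ : (0:ℝ) < Real.pi := Real.pi_pos
  set c : ℝ := Real.pi / T with hcdef
  have hcpos : 0 < c := div_pos hπ hT
  set K : ℝ := ∑ k ∈ Finset.range (n/2),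
      2 * |p k| * ((n - 2*k - 1).factorial : ℝ) * (c⁻¹)^(n - 2*k - 1) with hKdef
  have hK0 : 0 ≤ K := Finset.sum_nonneg fun k _ => by positivity
  refine ⟨K * c⁻¹ + 1, 1, by positivity, le_refl 1, fun t ht => ?_⟩
  have ht0 : (0:ℝ) < t := lt_of_lt_of_le one_pos ht
  have hct : (0:ℝ) < c * t := by positivity
  set r : ℝ → ℝ := fun τ => ∑ k ∈ Finset.range (n/2),
      (-1:ℝ)^(n/2 - k) * p k * t^(n - 2*k) * τ^(n - 2*k - 1) * Real.tanh (Real.pi * t * τ / T)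
    with hrdef
  set s : ℝ → ℝ := fun τ => ∑ k ∈ Finset.range (n/2),
      (-1:ℝ)^(n/2 - k) * p k * t^(n - 2*k) * τ^(n - 2*k - 1) with hsdef
  have hrc : Continuous r := by
    rw [hrdef]
    apply continuous_finset_sum
    intro k _
    exact (continuous_const.mul (continuous_pow _)).mul
      (aux_continuous_tanh.comp (by fun_prop))
  have hsc : Continuous s := by
    rw [hsdef]
    apply continuous_finset_sum
    intro k _
    fun_prop
  -- Step 1: the imaginary part equals ∫ r
  have h1 : (segInt
          (fun w => (∑ k ∈ Finset.range (n / 2), (p k : ℂ) * w ^ (n - 2 * k - 1)) *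
            Complex.tan ((Real.pi : ℂ) * w / (T : ℂ)))
          0 ((t : ℂ) * Complex.I)).im = ∫ τ in (0:ℝ)..1, r τ := by
    rw [segInt]
    simp only [zero_add, sub_zero]
    rw [intervalIntegral.integral_congr (g := fun τ : ℝ => ((r τ : ℝ) : ℂ) * Complex.I)
      (fun τ _ => aux_point_eq n hne T hT p t τ)]
    rw [intervalIntegral.integral_mul_const, intervalIntegral.integral_ofReal]
    simp
  -- Step 2: the sum equals ∫ s
  have h2 : ∑ k ∈ Finset.range (n / 2),
      (-1 : ℝ) ^ (n / 2 - k) * p k * t ^ (n - 2 * k) / ((n - 2 * k : ℕ) : ℝ)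
      = ∫ τ in (0:ℝ)..1, s τ := by
    rw [hsdef]
    rw [intervalIntegral.integral_finset_sum (fun k _ =>
      (Continuous.intervalIntegrable (by fun_prop) _ _))]
    refine Finset.sum_congr rfl fun k hk => ?_
    rw [Finset.mem_range] at hk
    rw [intervalIntegral.integral_const_mul, integral_pow]
    have hcast : ((n - 2*k - 1 : ℕ):ℝ) + 1 = ((n - 2*k : ℕ):ℝ) := by
      rw [← Nat.cast_add_one]
      congr 1
      omega
    rw [hcast]
    norm_num [div_eq_mul_inv]
  rw [h1, h2, ← intervalIntegral.integral_sub (hrc.intervalIntegrable _ _)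
    (hsc.intervalIntegrable _ _)]
  -- Step 3: pointwise bound
  have hb : ∀ τ ∈ Set.uIoc (0:ℝ) 1, |r τ - s τ| ≤ K * (t * Real.exp (-(c*t*τ))) := by
    intro τ hτ
    rw [Set.uIoc_of_le (by norm_num : (0:ℝ) ≤ 1)] at hτ
    have hτ0 : 0 ≤ τ := hτ.1.le
    have hdiff : r τ - s τ = ∑ k ∈ Finset.range (n/2),
        (-1:ℝ)^(n/2 - k) * p k * t^(n - 2*k) * τ^(n - 2*k - 1) *
          (Real.tanh (Real.pi * t * τ / T) - 1) := by
      rw [hrdef, hsdef, ← Finset.sum_sub_distrib]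
      exact Finset.sum_congr rfl fun k _ => by ring
    rw [hdiff, hKdef, Finset.sum_mul]
    refine (Finset.abs_sum_le_sum_abs _ _).trans (Finset.sum_le_sum fun k hk => ?_)
    rw [Finset.mem_range] at hk
    set x := Real.pi * t * τ / T with hxdef
    obtain ⟨htb1, htb2⟩ := aux_tanh_bound x
    have hxc : x = c * (t * τ) := by rw [hxdef, hcdef]; ring
    have heq : |(-1:ℝ)^(n/2 - k) * p k * t^(n - 2*k) * τ^(n - 2*k - 1) * (Real.tanh x - 1)|
        = |p k| * (t * (t*τ)^(n - 2*k - 1)) * (1 - Real.tanh x) := by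
      rw [abs_mul, abs_mul, abs_mul, abs_mul, abs_pow, abs_neg, abs_one, one_pow, one_mul,
        abs_of_nonneg (pow_nonneg ht0.le _), abs_of_nonneg (pow_nonneg hτ0 _),
        abs_of_nonpos (by linarith : Real.tanh x - 1 ≤ 0)]
      have hps : t^(n - 2*k) = t^(n - 2*k - 1) * t := by
        rw [← pow_succ]
        congr 1
        omega
      rw [hps, mul_pow]
      ring
    rw [heq]
    calc |p k| * (t * (t*τ)^(n - 2*k - 1)) * (1 - Real.tanh x)
        ≤ |p k| * (t * (t*τ)^(n - 2*k - 1)) * (2 * Real.exp (-(2*(c*(t*τ))))) := by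
          have h0 : 0 ≤ |p k| * (t * (t*τ)^(n - 2*k - 1)) := by positivity
          exact mul_le_mul_of_nonneg_left (by rw [← hxc]; exact htb2) h0
      _ = (2 * |p k|) * (t * ((t*τ)^(n - 2*k - 1) * Real.exp (-(2*(c*(t*τ)))))) := by ring
      _ ≤ (2 * |p k|) * (t * ((((n - 2*k - 1).factorial : ℝ) * (c⁻¹)^(n - 2*k - 1)) *
            Real.exp (-(c*(t*τ))))) := by
          exact mul_le_mul_of_nonneg_left (mul_le_mul_of_nonneg_left
            (aux_pow_exp (t*τ) c (by positivity) hcpos _) ht0.le) (by positivity)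
      _ = 2 * |p k| * ((n - 2*k - 1).factorial : ℝ) * (c⁻¹)^(n - 2*k - 1) *
            (t * Real.exp (-(c*t*τ))) := by rw [mul_assoc c t τ]; ring
  -- Step 4: integrate the bound
  have hGc : Continuous fun τ : ℝ => K * (t * Real.exp (-(c*t*τ))) := by fun_prop
  have hnorm := intervalIntegral.norm_integral_le_of_norm_le
    (f := fun τ => r τ - s τ) (g := fun τ => K * (t * Real.exp (-(c*t*τ))))
    (μ := MeasureTheory.volume) (a := 0) (b := 1) (by norm_num)
    ((MeasureTheory.ae_of_all _ fun τ hτ => by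
        rw [Real.norm_eq_abs]; exact hb τ (by rwa [Set.uIoc_of_le zero_le_one])))
    (hGc.intervalIntegrable _ _)
  rw [Real.norm_eq_abs] at hnorm
  refine hnorm.trans ?_
  -- compute the integral of the bound
  have hmul := intervalIntegral.mul_integral_comp_mul_left
    (a := (0:ℝ)) (b := 1) (f := fun x => Real.exp (-x)) (c := c*t)
  simp only [mul_zero, mul_one] at hmul
  have hI2 : ∫ x in (0:ℝ)..(c*t), Real.exp (-x) = 1 - Real.exp (-(c*t)) := by
    rw [intervalIntegral.integral_comp_neg (fun x => Real.exp x), integral_exp]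
    norm_num
  have hIval : ∫ τ in (0:ℝ)..1, Real.exp (-(c*t*τ)) = (c*t)⁻¹ * (1 - Real.exp (-(c*t))) := by
    rw [← hI2, ← hmul, ← mul_assoc, inv_mul_cancel₀ hct.ne', one_mul]
  have hGval : ∫ τ in (0:ℝ)..1, K * (t * Real.exp (-(c*t*τ)))
      = K * t * ((c*t)⁻¹ * (1 - Real.exp (-(c*t)))) := by
    rw [intervalIntegral.integral_const_mul, intervalIntegral.integral_const_mul, hIval]
    ring
  rw [hGval]
  have hexp1 : Real.exp (-(c*t)) ≤ 1 := Real.exp_le_one_iff.2 (by linarith)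
  have hexp0 : 0 < Real.exp (-(c*t)) := Real.exp_pos _
  have hval : K * t * ((c*t)⁻¹ * (1 - Real.exp (-(c*t))))
      = K * c⁻¹ * (1 - Real.exp (-(c*t))) := by
    field_simp
  have h0' : 0 ≤ K * t * ((c*t)⁻¹ * (1 - Real.exp (-(c*t)))) :=
    mul_nonneg (mul_nonneg hK0 ht0.le) (mul_nonneg (inv_nonneg.2 hct.le) (by linarith))
  rw [hval]
  have hKc : 0 ≤ K * c⁻¹ := mul_nonneg hK0 (inv_nonneg.2 hcpos.le)
  nlinarith
end

section
/- Let n be an even positive integer, T > 0, and let P(w) = Σ_{k=0}^{n/2−1} p_k w^{n−2k−1} be an odd polynomial with real coefficients p_k. Then there exist constants C > 0 and t₀ ≥ 1 such that for all real t ≥ t₀, | Im ∫_{[0, it]} P(w)·(−cot(πw/T)) dw − Σ_{k=0}^{n/2−1} (−1)^{n/2−k} p_k t^{n−2k}/(n−2k) | ≤ C, where the integrand P(w)(−cot(πw/T)) is extended by continuity at w = 0 (removable singularity, since P(0) = 0). -/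
open Real MeasureTheory intervalIntegral

lemma aux_neg_cot_I (s : ℝ) (hs : 0 < s) :
    -Complex.cot ((s:ℂ) * Complex.I)
      = ((Real.cosh s / Real.sinh s : ℝ) : ℂ) * Complex.I := by
  have h : (Real.sinh s : ℂ) ≠ 0 := by
    exact_mod_cast (Real.sinh_pos_iff.2 hs).ne'
  rw [Complex.cot_eq_cos_div_sin, Complex.cos_mul_I, Complex.sin_mul_I,
    ← Complex.ofReal_cosh, ← Complex.ofReal_sinh]
  rw [Complex.ofReal_div, div_mul_eq_mul_div, ← neg_div,
    div_eq_div_iff (mul_ne_zero h Complex.I_ne_zero) h]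
  linear_combination (-((Real.cosh s : ℂ) * (Real.sinh s : ℂ))) * Complex.I_mul_I

lemma aux_coth_sub_one (x : ℝ) (hx : 0 < x) :
    |Real.cosh x / Real.sinh x - 1| ≤ Real.exp (-x) / x := by
  have hs : 0 < Real.sinh x := Real.sinh_pos_iff.2 hx
  have h1 : Real.cosh x / Real.sinh x - 1 = Real.exp (-x) / Real.sinh x := by
    rw [div_sub_one hs.ne', Real.cosh_sub_sinh]
  rw [h1, abs_of_nonneg (by positivity)]
  gcongr
  exact (Real.self_lt_sinh_iff.2 hx).le

lemma aux_pow_le (j : ℕ) (x : ℝ) (hx : 0 ≤ x) : x ^ j ≤ j.factorial * Real.exp x := by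
  have h := Real.pow_div_factorial_le_exp (x := x) hx j
  have hf : (0:ℝ) < j.factorial := by positivity
  rw [div_le_iff₀ hf] at h
  linarith [h]

lemma aux_three_I (q a b c : ℝ) :
    (q:ℂ) * ((a:ℂ)*Complex.I) * (((b:ℂ))*Complex.I) * ((c:ℂ)*Complex.I)
      = ((-(q*a*b*c):ℝ):ℂ) * Complex.I := by
  push_cast
  linear_combination ((q:ℂ)*a*b*c*Complex.I) * Complex.I_mul_I

lemma aux_im (f : ℝ → ℝ) (hf : IntervalIntegrable f volume 0 1) :
    (∫ τ in (0:ℝ)..1, ((f τ : ℝ):ℂ) * Complex.I).im = ∫ τ in (0:ℝ)..1, f τ := by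
  have hf' : IntervalIntegrable (fun τ => ((f τ : ℝ):ℂ) * Complex.I) volume 0 1 :=
    ⟨(hf.1.ofReal (𝕜 := ℂ)).mul_const _, (hf.2.ofReal (𝕜 := ℂ)).mul_const _⟩
  rw [← Complex.imCLM_apply, ← ContinuousLinearMap.intervalIntegral_comp_comm _ hf']
  apply intervalIntegral.integral_congr
  intro τ _
  simp

lemma aux_integrand (n l : ℕ) (hl : n = 2*l) (T : ℝ) (hT : 0 < T)
    (p : ℕ → ℝ) (t τ : ℝ) (ht : 0 < t) (hτ : 0 < τ) :
    (∑ k ∈ Finset.range (n / 2),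
        (p k : ℂ) * ((0:ℂ) + (τ:ℂ) * ((t:ℂ)*Complex.I - 0)) ^ (n - 2*k - 1)) *
        (-Complex.cot ((Real.pi:ℂ) * ((0:ℂ) + (τ:ℂ) * ((t:ℂ)*Complex.I - 0)) / (T:ℂ))) *
        ((t:ℂ)*Complex.I - 0)
      = ((∑ k ∈ Finset.range (n/2), (-1:ℝ)^(n/2 - k) * p k * t^(n-2*k) * τ^(n-2*k-1)
          * (Real.cosh (Real.pi/T*(t*τ)) / Real.sinh (Real.pi/T*(t*τ))) : ℝ) : ℂ)
          * Complex.I := by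
  have hs : 0 < Real.pi/T*(t*τ) := by
    have := Real.pi_pos
    positivity
  have hw : (0:ℂ) + (τ:ℂ) * ((t:ℂ)*Complex.I - 0) = ((τ*t:ℝ):ℂ) * Complex.I := by
    push_cast
    ring
  have hT' : (T:ℂ) ≠ 0 := by exact_mod_cast hT.ne'
  have harg : (Real.pi:ℂ) * (((τ*t:ℝ):ℂ) * Complex.I) / (T:ℂ)
      = ((Real.pi/T*(t*τ) : ℝ):ℂ) * Complex.I := by
    field_simp
    push_cast
    ring_nf
    simp [hT']
  rw [hw, harg, aux_neg_cot_I _ hs]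
  rw [Finset.sum_mul, Finset.sum_mul, Complex.ofReal_sum, Finset.sum_mul]
  refine Finset.sum_congr rfl fun k hk => ?_
  have hk' : k < l := by
    have h := Finset.mem_range.1 hk
    omega
  have hn2 : n / 2 = l := by omega
  set m := n - 2*k - 1 with hm0
  set j := l - k - 1 with hj0
  have hm : m = 2*j + 1 := by omega
  have hj1 : n/2 - k = j + 1 := by omega
  have hmm : n - 2*k = m + 1 := by omega
  have hpow : (((τ*t:ℝ):ℂ)*Complex.I)^m
      = ((((-1:ℝ)^j * (τ*t)^m):ℝ):ℂ) * Complex.I := by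
    rw [hm, mul_pow, pow_succ, pow_succ, pow_mul, pow_mul, Complex.I_sq]
    push_cast
    ring
  rw [sub_zero, hpow, aux_three_I]
  have hre : -(p k * ((-1:ℝ)^j*(τ*t)^m)
        * (Real.cosh (Real.pi/T*(t*τ)) / Real.sinh (Real.pi/T*(t*τ))) * t)
      = (-1:ℝ)^(n/2 - k) * p k * t^(n-2*k) * τ^m
        * (Real.cosh (Real.pi/T*(t*τ)) / Real.sinh (Real.pi/T*(t*τ))) := by
    rw [hj1, hmm]
    ring
  rw [hre]

lemma aux_term_bound (m : ℕ) (hm : 1 ≤ m) (c t τ : ℝ) (hc : 0 < c) (ht : 1 ≤ t)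
    (hτ : 0 < τ) :
    t^(m+1) * τ^m * |Real.cosh (c*(t*τ)) / Real.sinh (c*(t*τ)) - 1|
      ≤ (2/c)^(m-1) * (m-1).factorial / c * (t * Real.exp (-(c*(t*τ))/2)) := by
  have ht0 : 0 < t := lt_of_lt_of_le one_pos ht
  have hs : 0 < c*(t*τ) := by positivity
  obtain ⟨i, hi⟩ : ∃ i, m = i + 1 := ⟨m-1, by omega⟩
  have hm1 : m - 1 = i := by omega
  rw [hm1, hi]
  have h1 := aux_coth_sub_one _ hs
  have h2 : (t*τ)^i ≤ (i.factorial * (2/c)^i) * Real.exp (c*(t*τ)/2) := by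
    have h3 := aux_pow_le i (c*(t*τ)/2) (by positivity)
    have h4 : (t*τ)^i = (2/c)^i * (c*(t*τ)/2)^i := by
      rw [← mul_pow]
      congr 1
      field_simp
    rw [h4]
    calc (2/c)^i * (c*(t*τ)/2)^i
        ≤ (2/c)^i * ((i.factorial : ℝ) * Real.exp (c*(t*τ)/2)) := by
          apply mul_le_mul_of_nonneg_left h3 (by positivity)
      _ = _ := by ring
  calc t^(i+1+1) * τ^(i+1) * |Real.cosh (c*(t*τ)) / Real.sinh (c*(t*τ)) - 1|
      ≤ t^(i+1+1) * τ^(i+1) * (Real.exp (-(c*(t*τ)))/(c*(t*τ))) :=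
        mul_le_mul_of_nonneg_left h1 (by positivity)
    _ = (1/c) * (t * ((t*τ)^i * Real.exp (-(c*(t*τ))))) := by
        field_simp
        ring
    _ ≤ (1/c) * (t * (((i.factorial * (2/c)^i) * Real.exp (c*(t*τ)/2)) * Real.exp (-(c*(t*τ))))) := by
        have hh : (t*τ)^i * Real.exp (-(c*(t*τ)))
            ≤ ((i.factorial * (2/c)^i) * Real.exp (c*(t*τ)/2)) * Real.exp (-(c*(t*τ))) :=
          mul_le_mul_of_nonneg_right h2 (Real.exp_pos _).le
        have hh2 := mul_le_mul_of_nonneg_left hh ht0.le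
        exact mul_le_mul_of_nonneg_left hh2 (by positivity)
    _ = (2/c)^i * (i.factorial : ℝ) / c * (t * Real.exp (-(c*(t*τ))/2)) := by
        rw [show Real.exp (-(c*(t*τ))/2)
            = Real.exp (c*(t*τ)/2) * Real.exp (-(c*(t*τ))) by
          rw [← Real.exp_add]; congr 1; ring]
        ring

lemma aux_exp_integral (b : ℝ) (hb : 0 < b) :
    ∫ τ in (0:ℝ)..1, Real.exp ((-b)*τ) ≤ 1/b := by
  rw [intervalIntegral.integral_comp_mul_left Real.exp (show (-b) ≠ 0 by linarith)]
  rw [integral_exp]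
  simp only [smul_eq_mul, mul_zero, mul_one, Real.exp_zero]
  have h0 : 0 < Real.exp (-b) := Real.exp_pos _
  have h1 : Real.exp (-b) ≤ 1 := Real.exp_le_one_iff.2 (by linarith)
  rw [inv_neg, one_div]
  have hbi : 0 < b⁻¹ := by positivity
  nlinarith

/-- Let `n` be an even positive integer, `T > 0`, and
`P w = Σ_{k=0}^{n/2-1} p_k w^{n-2k-1}` an odd polynomial with real coefficients.  Then
there exist `C > 0` and `t₀ ≥ 1` such that for all real `t ≥ t₀`,
`|Im ∫_{[0, it]} P w · (-cot (π w / T)) dw - Σ_k (-1)^{n/2-k} p_k t^{n-2k}/(n-2k)| ≤ C`.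
(The singularity of `P w · (-cot (π w / T))` at `w = 0` is removable since `P 0 = 0`;
the value of the integrand at the single point `τ = 0` does not affect the integral.) -/
theorem im_segInt_poly_neg_cot_asymptotic (n : ℕ) (hn : 0 < n) (hne : Even n)
    (T : ℝ) (hT : 0 < T) (p : ℕ → ℝ) :
    ∃ C t₀ : ℝ, 0 < C ∧ 1 ≤ t₀ ∧ ∀ t : ℝ, t₀ ≤ t →
      |(segInt
          (fun w => (∑ k ∈ Finset.range (n / 2), (p k : ℂ) * w ^ (n - 2 * k - 1)) *
            (-Complex.cot ((Real.pi : ℂ) * w / (T : ℂ))))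
          0 ((t : ℂ) * Complex.I)).im
        - ∑ k ∈ Finset.range (n / 2),
            (-1 : ℝ) ^ (n / 2 - k) * p k * t ^ (n - 2 * k) / ((n - 2 * k : ℕ) : ℝ)| ≤ C := by
  have hπ : 0 < Real.pi := Real.pi_pos
  have hc : 0 < Real.pi / T := by positivity
  have hl : n = 2 * (n / 2) := by
    obtain ⟨l0, h⟩ := hne
    omega
  set A : ℝ := ∑ k ∈ Finset.range (n/2),
      |p k| * ((2/(Real.pi/T))^(n-2*k-1-1) * ((n-2*k-1-1).factorial : ℝ) / (Real.pi/T))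
    with hAdef
  have hA : 0 ≤ A := Finset.sum_nonneg fun k _ => by positivity
  refine ⟨(A+1) * (2/(Real.pi/T)), 1,
    mul_pos (by linarith) (by positivity), le_refl 1, fun t ht => ?_⟩
  have ht0 : 0 < t := lt_of_lt_of_le one_pos ht
  set Q : ℝ → ℝ := fun τ => ∑ k ∈ Finset.range (n/2),
      (-1:ℝ)^(n/2-k) * p k * t^(n-2*k) * τ^(n-2*k-1) with hQdef
  set R : ℝ → ℝ := fun τ => ∑ k ∈ Finset.range (n/2),
      (-1:ℝ)^(n/2-k) * p k * t^(n-2*k) * τ^(n-2*k-1)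
        * (Real.cosh (Real.pi/T*(t*τ)) / Real.sinh (Real.pi/T*(t*τ)) - 1) with hRdef
  set g : ℝ → ℝ := fun τ => (A+1) * (t * Real.exp ((-(Real.pi/T*t/2))*τ)) with hgdef
  have hQint : IntervalIntegrable Q volume 0 1 := by
    apply Continuous.intervalIntegrable
    simp only [hQdef]
    exact continuous_finset_sum _ fun k _ => continuous_const.mul (continuous_pow _)
  have hgcont : Continuous g := by
    simp only [hgdef]
    exact continuous_const.mul (continuous_const.mul
      (Real.continuous_exp.comp (continuous_const.mul continuous_id)))
  have hgint : IntervalIntegrable g volume 0 1 := hgcont.intervalIntegrable _ _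
  have hbound : ∀ τ ∈ Set.Ioc (0:ℝ) 1, |R τ| ≤ g τ := by
    intro τ hτ
    simp only [hRdef, hgdef]
    calc |∑ k ∈ Finset.range (n/2),
            (-1:ℝ)^(n/2-k) * p k * t^(n-2*k) * τ^(n-2*k-1)
              * (Real.cosh (Real.pi/T*(t*τ)) / Real.sinh (Real.pi/T*(t*τ)) - 1)|
        ≤ ∑ k ∈ Finset.range (n/2),
            |(-1:ℝ)^(n/2-k) * p k * t^(n-2*k) * τ^(n-2*k-1)
              * (Real.cosh (Real.pi/T*(t*τ)) / Real.sinh (Real.pi/T*(t*τ)) - 1)| :=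
          Finset.abs_sum_le_sum_abs _ _
      _ ≤ ∑ k ∈ Finset.range (n/2),
            (|p k| * ((2/(Real.pi/T))^(n-2*k-1-1) * ((n-2*k-1-1).factorial : ℝ) / (Real.pi/T)))
              * (t * Real.exp ((-(Real.pi/T*t/2))*τ)) := by
          refine Finset.sum_le_sum fun k hk => ?_
          have hk' := Finset.mem_range.1 hk
          have hm1 : 1 ≤ n - 2*k - 1 := by omega
          have habs : |(-1:ℝ)^(n/2-k) * p k * t^(n-2*k) * τ^(n-2*k-1)
                * (Real.cosh (Real.pi/T*(t*τ)) / Real.sinh (Real.pi/T*(t*τ)) - 1)|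
              = |p k| * (t^(n-2*k) * τ^(n-2*k-1)
                * |Real.cosh (Real.pi/T*(t*τ)) / Real.sinh (Real.pi/T*(t*τ)) - 1|) := by
            rw [abs_mul, abs_mul, abs_mul, abs_mul, abs_pow, abs_neg, abs_one, one_pow,
              one_mul, abs_of_pos (pow_pos ht0 _), abs_of_pos (pow_pos hτ.1 _)]
            ring
          rw [habs]
          have hb := aux_term_bound (n-2*k-1) hm1 (Real.pi/T) t τ hc ht hτ.1
          have hpowt : t^(n-2*k) = t^((n-2*k-1)+1) := by
            congr 1
            omega
          have hexp : Real.exp (-((Real.pi/T)*(t*τ))/2)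
              = Real.exp ((-(Real.pi/T*t/2))*τ) := by
            congr 1
            ring
          rw [hpowt]
          calc |p k| * (t^((n-2*k-1)+1) * τ^(n-2*k-1)
                * |Real.cosh (Real.pi/T*(t*τ)) / Real.sinh (Real.pi/T*(t*τ)) - 1|)
              ≤ |p k| * ((2/(Real.pi/T))^(n-2*k-1-1) * ((n-2*k-1-1).factorial : ℝ) / (Real.pi/T)
                  * (t * Real.exp (-((Real.pi/T)*(t*τ))/2))) :=
                mul_le_mul_of_nonneg_left hb (abs_nonneg _)
            _ = (|p k| * ((2/(Real.pi/T))^(n-2*k-1-1) * ((n-2*k-1-1).factorial : ℝ) / (Real.pi/T)))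
                  * (t * Real.exp ((-(Real.pi/T*t/2))*τ)) := by
                rw [hexp]
                ring
      _ = A * (t * Real.exp ((-(Real.pi/T*t/2))*τ)) := by
          rw [← Finset.sum_mul]
      _ ≤ (A+1) * (t * Real.exp ((-(Real.pi/T*t/2))*τ)) :=
          mul_le_mul_of_nonneg_right (by linarith) (by positivity)
  have hRint : IntervalIntegrable R volume 0 1 := by
    rw [intervalIntegrable_iff, Set.uIoc_of_le zero_le_one]
    have hmeas : AEStronglyMeasurable R (volume.restrict (Set.Ioc (0:ℝ) 1)) := by
      apply ContinuousOn.aestronglyMeasurable _ measurableSet_Ioc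
      simp only [hRdef]
      refine continuousOn_finset_sum _ fun k _ => ?_
      refine ContinuousOn.mul (Continuous.continuousOn (by fun_prop)) ?_
      refine ContinuousOn.sub ?_ continuousOn_const
      refine ContinuousOn.div
        (Continuous.continuousOn (by fun_prop)) (Continuous.continuousOn (by fun_prop))
        fun τ hτ => ?_
      have : 0 < Real.pi/T*(t*τ) := by
        have := hτ.1
        positivity
      exact (Real.sinh_pos_iff.2 this).ne'
    apply Integrable.mono' hgint.1 hmeas
    filter_upwards [ae_restrict_mem measurableSet_Ioc] with τ hτ
    rw [Real.norm_eq_abs]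
    exact hbound τ hτ
  have hQval : ∫ τ in (0:ℝ)..1, Q τ
      = ∑ k ∈ Finset.range (n / 2),
          (-1 : ℝ) ^ (n / 2 - k) * p k * t ^ (n - 2 * k) / ((n - 2 * k : ℕ) : ℝ) := by
    simp only [hQdef]
    rw [intervalIntegral.integral_finset_sum
      (fun k _ => ((by fun_prop : Continuous fun τ : ℝ =>
        (-1:ℝ)^(n/2-k) * p k * t^(n-2*k) * τ^(n-2*k-1))).intervalIntegrable _ _)]
    refine Finset.sum_congr rfl fun k hk => ?_
    have hk' := Finset.mem_range.1 hk
    rw [intervalIntegral.integral_const_mul, integral_pow]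
    have h2 : n - 2*k - 1 + 1 = n - 2*k := by omega
    have h3 : ((n-2*k-1:ℕ):ℝ) + 1 = ((n-2*k:ℕ):ℝ) := by
      rw [← h2]
      push_cast
      ring
    rw [h2, h3, zero_pow (by omega : n - 2*k ≠ 0), one_pow]
    ring
  have hsum_eq : ∀ τ:ℝ,
      (∑ k ∈ Finset.range (n/2), (-1:ℝ)^(n/2-k) * p k * t^(n-2*k) * τ^(n-2*k-1)
         * (Real.cosh (Real.pi/T*(t*τ)) / Real.sinh (Real.pi/T*(t*τ))))
        = Q τ + R τ := by
    intro τ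
    simp only [hQdef, hRdef]
    rw [← Finset.sum_add_distrib]
    exact Finset.sum_congr rfl fun k _ => by ring
  have heq : segInt
        (fun w => (∑ k ∈ Finset.range (n / 2), (p k : ℂ) * w ^ (n - 2 * k - 1)) *
          (-Complex.cot ((Real.pi : ℂ) * w / (T : ℂ))))
        0 ((t : ℂ) * Complex.I)
      = ∫ τ in (0:ℝ)..1, (((Q τ + R τ : ℝ)):ℂ) * Complex.I := by
    unfold segInt
    apply intervalIntegral.integral_congr_ae
    refine Filter.Eventually.of_forall fun τ hτ => ?_
    rw [Set.uIoc_of_le (zero_le_one (α := ℝ))] at hτ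
    have hmain := aux_integrand n (n/2) hl T hT p t τ ht0 hτ.1
    exact hmain.trans (by rw [hsum_eq τ])
  have h1 : (segInt
        (fun w => (∑ k ∈ Finset.range (n / 2), (p k : ℂ) * w ^ (n - 2 * k - 1)) *
          (-Complex.cot ((Real.pi : ℂ) * w / (T : ℂ))))
        0 ((t : ℂ) * Complex.I)).im
      = ∫ τ in (0:ℝ)..1, (Q τ + R τ) := by
    rw [heq, aux_im _ (hQint.add hRint)]
  rw [h1, intervalIntegral.integral_add hQint hRint, hQval, add_sub_cancel_left]
  have hnorm : |∫ τ in (0:ℝ)..1, R τ| ≤ |∫ τ in (0:ℝ)..1, g τ| := by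
    have hae : ∀ᵐ τ ∂(volume.restrict (Set.uIoc (0:ℝ) 1)), ‖R τ‖ ≤ g τ := by
      rw [Set.uIoc_of_le (zero_le_one (α := ℝ))]
      filter_upwards [ae_restrict_mem measurableSet_Ioc] with τ hτ
      rw [Real.norm_eq_abs]
      exact hbound τ hτ
    have hX := intervalIntegral.norm_integral_le_of_norm_le zero_le_one
      ((ae_restrict_iff' measurableSet_Ioc).1
        (by rwa [Set.uIoc_of_le (zero_le_one (α := ℝ))] at hae)) hgint
    rw [Real.norm_eq_abs] at hX
    exact hX.trans (le_abs_self _)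
  have hgval : |∫ τ in (0:ℝ)..1, g τ| ≤ (A+1) * (2/(Real.pi/T)) := by
    simp only [hgdef]
    rw [intervalIntegral.integral_const_mul, intervalIntegral.integral_const_mul]
    have hE0 : 0 ≤ ∫ τ in (0:ℝ)..1, Real.exp ((-(Real.pi/T*t/2))*τ) :=
      intervalIntegral.integral_nonneg zero_le_one fun x _ => (Real.exp_pos _).le
    have hE : (∫ τ in (0:ℝ)..1, Real.exp ((-(Real.pi/T*t/2))*τ)) ≤ 1/(Real.pi/T*t/2) :=
      aux_exp_integral _ (by positivity)
    rw [abs_of_nonneg (mul_nonneg (by linarith)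
      (mul_nonneg ht0.le hE0))]
    calc (A+1) * (t * ∫ τ in (0:ℝ)..1, Real.exp ((-(Real.pi/T*t/2))*τ))
        ≤ (A+1) * (t * (1/(Real.pi/T*t/2))) :=
          mul_le_mul_of_nonneg_left (mul_le_mul_of_nonneg_left hE ht0.le) (by linarith)
      _ = (A+1) * (2/(Real.pi/T)) := by
          congr 1
          field_simp
  exact le_trans hnorm hgval
end

section
/- Let a > 0. There exists a constant C = C(a) > 0, depending only on a, with the following property: for every t ∈ ℝ, every m, M > 0, and every function F holomorphic on an open set containing the closed disc D of radius a + 1/4 centered at a + it, if |F(w)| ≤ M for all w ∈ D, |F(a + it)| ≥ m, and F has no zeros on the straight segment from it to a + it, then the variation of the argument of F along this segment satisfies | Im ∫_{[a+it, it]} F′(w)/F(w) dw | ≤ C·(1 + log(M/m)), where ∫_{[a+it, it]} denotes the contour integral along the straight segment from a + it to it. -/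
open Complex Metric Set Filter Topology intervalIntegral

set_option maxHeartbeats 1600000

lemma zero_count (c : ℂ) (r R B : ℝ) (hr : 0 < r) (hrR : r < R)
    (V : Set ℂ) (hV : IsOpen V) (hVb : closedBall c R ⊆ V) :
    ∀ (l : List ℂ), l.Nodup → ∀ (H : ℂ → ℂ), DifferentiableOn ℂ H V →
    (∀ z ∈ closedBall c R, ‖H z‖ ≤ B) →
    (∀ w ∈ l, w ∈ closedBall c r ∧ H w = 0) →
    ‖H c‖ * (R / r) ^ l.length ≤ B := by
  have hR : 0 < R := hr.trans hrR
  have hRC : (R : ℂ) ≠ 0 := Complex.ofReal_ne_zero.mpr hR.ne'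
  intro l
  induction l with
  | nil =>
    intro _ H _ hB _
    simpa using hB c (mem_closedBall_self hR.le)
  | cons z₀ l ih =>
    intro hnd H hd hB hzs
    have hB0 : 0 ≤ B := le_trans (norm_nonneg _) (hB c (mem_closedBall_self hR.le))
    obtain ⟨hz₀r, hz₀0⟩ := hzs z₀ List.mem_cons_self
    by_cases hz₀c : z₀ = c
    · have : ‖H c‖ = 0 := by rw [← hz₀c, hz₀0]; simp
      rw [this, zero_mul]; exact hB0
    set u : ℂ := z₀ - c with hu
    have hz₀R : z₀ ∈ closedBall c R := closedBall_subset_closedBall hrR.le hz₀r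
    have hz₀V : z₀ ∈ V := hVb hz₀R
    set H₁ : ℂ → ℂ := fun z => dslope H z₀ z * ((R:ℂ)^2 - (starRingEnd ℂ) u * (z - c)) / R
      with hH₁
    have hdH₁ : DifferentiableOn ℂ H₁ V := by
      apply DifferentiableOn.div_const
      exact ((Complex.differentiableOn_dslope (hV.mem_nhds hz₀V)).mpr hd).mul
        ((differentiable_const _).sub ((differentiable_const _).mul
          (differentiable_id.sub_const c))).differentiableOn
    have hval : ∀ w, w ≠ z₀ →
        H₁ w = H w / (w - z₀) * ((R:ℂ)^2 - (starRingEnd ℂ) u * (w - c)) / R := by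
      intro w hw
      rw [hH₁]
      simp only [dslope_of_ne H hw, slope_def_field, hz₀0, sub_zero]
    have hfr : ∀ z ∈ sphere c R, ‖H₁ z‖ ≤ B := by
      intro z hz
      have hzR : ‖z - c‖ = R := by
        exact mem_sphere_iff_norm.1 hz
      have hler : ‖z₀ - c‖ ≤ r := by
        exact mem_closedBall_iff_norm.1 hz₀r
      have hzz₀ : z ≠ z₀ := by
        intro h; rw [h] at hzR; linarith [hzR ▸ hler]
      have habs : ‖z - z₀‖ ≠ 0 := by
        simpa [sub_eq_zero] using hzz₀
      have hnum : ‖(R:ℂ)^2 - (starRingEnd ℂ) u * (z - c)‖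
          = R * ‖z - z₀‖ := by
        have h1 : ((R:ℂ))^2 = (z - c) * (starRingEnd ℂ) (z - c) := by
          rw [Complex.mul_conj', hzR]
        have key : (R:ℂ)^2 - (starRingEnd ℂ) u * (z - c)
            = (z - c) * (starRingEnd ℂ) (z - z₀) := by
          rw [h1, hu]; simp only [map_sub]; try ring
        rw [key, norm_mul, RCLike.norm_conj, hzR]
      have harith : ∀ x : ℝ, x / ‖z - z₀‖ * (R * ‖z - z₀‖) / R = x := by
        intro x
        have h4 : x / ‖z - z₀‖ * (R * ‖z - z₀‖) / R
            = x * ((R * ‖z - z₀‖) / (R * ‖z - z₀‖)) := by ring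
        rw [h4, div_self (mul_ne_zero hR.ne' habs), mul_one]
      have heq : ‖H₁ z‖ = ‖H z‖ := by
        rw [hval z hzz₀, norm_div, norm_mul, norm_div, hnum, Complex.norm_real, Real.norm_eq_abs,
          abs_of_pos hR]
        exact harith _
      rw [heq]; exact hB z (sphere_subset_closedBall hz)
    have hball : ∀ z ∈ closedBall c R, ‖H₁ z‖ ≤ B := by
      intro z hz
      have hdc : DiffContOnCl ℂ H₁ (ball c R) :=
        ⟨hdH₁.mono (ball_subset_closedBall.trans hVb),
          by rw [closure_ball c hR.ne']; exact (hdH₁.mono hVb).continuousOn⟩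
      refine Complex.norm_le_of_forall_mem_frontier_norm_le isBounded_ball hdc ?_ ?_
      · intro w hw
        rw [frontier_ball c hR.ne'] at hw
        exact hfr w hw
      · rwa [closure_ball c hR.ne']
    have hih := ih hnd.of_cons H₁ hdH₁ hball (fun w hw => by
      obtain ⟨hwr, hw0⟩ := hzs w (List.mem_cons_of_mem _ hw)
      refine ⟨hwr, ?_⟩
      have hwz₀ : w ≠ z₀ := fun h => (List.nodup_cons.1 hnd).1 (h ▸ hw)
      rw [hval w hwz₀, hw0]; simp)
    have hcz₀ : ‖c - z₀‖ ≤ r := by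
      rw [← norm_neg, neg_sub]
      exact mem_closedBall_iff_norm.1 hz₀r
    have hcz₀0 : 0 < ‖c - z₀‖ := by
      simpa [sub_eq_zero] using (Ne.symm hz₀c)
    have hcne : (c - z₀) ≠ 0 := sub_ne_zero.2 (Ne.symm hz₀c)
    have hH₁c : ‖H₁ c‖ = ‖H c‖ * R / ‖c - z₀‖ := by
      have h2 : H₁ c = H c / (c - z₀) * R := by
        rw [hval c (Ne.symm hz₀c)]
        field_simp
        ring
      rw [h2, norm_mul, norm_div, Complex.norm_real, Real.norm_eq_abs, abs_of_pos hR]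
      ring
    have hstep : ‖H c‖ * (R / r) ≤ ‖H₁ c‖ := by
      rw [hH₁c, mul_div_assoc]
      have h3 : R / r ≤ R / ‖c - z₀‖ := by gcongr
      exact mul_le_mul_of_nonneg_left h3 (norm_nonneg _)
    calc ‖H c‖ * (R / r) ^ (z₀ :: l).length
        = (‖H c‖ * (R / r)) * (R / r) ^ l.length := by
          rw [List.length_cons]; ring
      _ ≤ ‖H₁ c‖ * (R / r) ^ l.length :=
          mul_le_mul_of_nonneg_right hstep (by positivity)
      _ ≤ B := hih


lemma reflect_hasDerivAt (b : ℂ) (F : ℂ → ℂ) (z : ℂ) (d : ℂ)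
    (hF : HasDerivAt F d ((starRingEnd ℂ) z + b)) :
    HasDerivAt (fun w => (starRingEnd ℂ) (F ((starRingEnd ℂ) w + b)))
      ((starRingEnd ℂ) d) z := by
  set ref : ℂ → ℂ := fun w => (starRingEnd ℂ) w + b with href
  set w₀ : ℂ := ref z with hw₀
  set G : ℂ → ℂ := fun w => (starRingEnd ℂ) (F (ref w)) with hG
  have hslope : Tendsto (slope F w₀) (𝓝[≠] w₀) (𝓝 d) :=
    hasDerivAt_iff_tendsto_slope.1 hF
  have hrefc : Continuous ref := by
    exact (continuous_conj).add continuous_const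
  have hrefinj : Function.Injective ref := fun x y h => by
    have : (starRingEnd ℂ) x = (starRingEnd ℂ) y := by
      have := h; simpa [href] using this
    exact star_injective this
  have htref : Tendsto ref (𝓝[≠] z) (𝓝[≠] w₀) := by
    rw [tendsto_nhdsWithin_iff]
    constructor
    · exact (hrefc.tendsto z).mono_left nhdsWithin_le_nhds
    · filter_upwards [self_mem_nhdsWithin] with x hx
      exact fun h => hx (hrefinj h)
  have hkey : ∀ w, slope G z w = (starRingEnd ℂ) (slope F w₀ (ref w)) := by
    intro w
    have h1 : ref w - w₀ = (starRingEnd ℂ) (w - z) := by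
      simp [href, hw₀, map_sub]
    rw [slope_def_field, slope_def_field, h1, map_div₀, map_sub, conj_conj]
  have : Tendsto (slope G z) (𝓝[≠] z) (𝓝 ((starRingEnd ℂ) d)) := by
    have hc : Tendsto (starRingEnd ℂ) (𝓝 d) (𝓝 ((starRingEnd ℂ) d)) :=
      (continuous_conj).tendsto d
    have := hc.comp (hslope.comp htref)
    exact this.congr (fun w => (hkey w).symm)
  exact hasDerivAt_iff_tendsto_slope.2 this


/-- Let `a > 0`.  There is `C = C a > 0`, depending only on `a`, such that:
for every `t ∈ ℝ`, every `m, M > 0` and every `F` holomorphic on an open set containing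
the closed disc `D` of radius `a + 1/4` centered at `a + it`, if `|F| ≤ M` on `D`,
`|F (a + it)| ≥ m`, and `F` has no zeros on the straight segment from `it` to `a + it`,
then the variation of the argument of `F` along this segment satisfies
`|Im ∫_{[a+it, it]} F' w / F w dw| ≤ C (1 + log (M / m))`. -/
theorem arg_variation_bound (a : ℝ) (ha : 0 < a) :
    ∃ C : ℝ, 0 < C ∧ ∀ (t m M : ℝ) (F : ℂ → ℂ) (U : Set ℂ),
      0 < m → 0 < M → IsOpen U →
      Metric.closedBall ((a : ℂ) + (t : ℂ) * Complex.I) (a + 1/4) ⊆ U →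
      DifferentiableOn ℂ F U →
      (∀ w ∈ Metric.closedBall ((a : ℂ) + (t : ℂ) * Complex.I) (a + 1/4),
        ‖F w‖ ≤ M) →
      m ≤ ‖F ((a : ℂ) + (t : ℂ) * Complex.I)‖ →
      (∀ w ∈ segment ℝ ((t : ℂ) * Complex.I) ((a : ℂ) + (t : ℂ) * Complex.I), F w ≠ 0) →
      |(segInt (fun w => deriv F w / F w)
          ((a : ℂ) + (t : ℂ) * Complex.I) ((t : ℂ) * Complex.I)).im| ≤
        C * (1 + Real.log (M / m)) := by

  set R : ℝ := a + 1/4 with hR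
  have haR : a < R := by rw [hR]; linarith
  have hR0 : 0 < R := by linarith
  set ρ : ℝ := R / a with hρ
  have hρ1 : 1 < ρ := (one_lt_div ha).mpr haR
  have hlogρ : 0 < Real.log ρ := Real.log_pos hρ1
  refine ⟨Real.pi + Real.pi / Real.log ρ, by positivity, ?_⟩
  intro t m M F U hm hM hU hUb hd hbound hmF hFne
  set c : ℂ := (a : ℂ) + (t : ℂ) * Complex.I with hc
  set z₂ : ℂ := (t : ℂ) * Complex.I with hz₂
  have hvc : z₂ - c = -(a:ℂ) := by rw [hz₂, hc]; ring
  set γ : ℝ → ℂ := fun τ => c + (τ:ℂ) * (z₂ - c) with hγ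
  -- basic facts about the segment
  have hγball : ∀ τ ∈ Icc (0:ℝ) 1, γ τ ∈ closedBall c a := by
    intro τ hτ
    simp only [hγ, mem_closedBall, dist_eq_norm, add_sub_cancel_left, hvc]
    rw [_root_.norm_mul, _root_.norm_neg, Complex.norm_real, Complex.norm_real, _root_.Real.norm_eq_abs,
      _root_.Real.norm_eq_abs, _root_.abs_of_nonneg ha.le, _root_.abs_of_nonneg hτ.1]
    nlinarith [hτ.2]
  have hγballR : ∀ τ ∈ Icc (0:ℝ) 1, γ τ ∈ closedBall c R :=
    fun τ hτ => closedBall_subset_closedBall haR.le (hγball τ hτ)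
  have hγseg : ∀ τ ∈ Icc (0:ℝ) 1, γ τ ∈ segment ℝ z₂ c := by
    intro τ hτ
    refine ⟨τ, 1 - τ, hτ.1, by linarith [hτ.2], by ring, ?_⟩
    simp only [hγ, Complex.real_smul]
    push_cast
    ring
  have hγU : ∀ τ ∈ Icc (0:ℝ) 1, γ τ ∈ U := fun τ hτ => hUb (hγballR τ hτ)
  have hγF : ∀ τ ∈ Icc (0:ℝ) 1, F (γ τ) ≠ 0 := fun τ hτ => hFne _ (hγseg τ hτ)
  have hγ0 : γ 0 = c := by simp [hγ]
  have hγinj : ∀ τ σ, τ ∈ Icc (0:ℝ) 1 → σ ∈ Icc (0:ℝ) 1 → γ τ = γ σ → τ = σ := by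
    intro τ σ _ _ h
    simp only [hγ, hvc, add_right_inj] at h
    have := mul_right_cancel₀ (neg_ne_zero.2 (Complex.ofReal_ne_zero.2 ha.ne')) h
    exact_mod_cast this
  have hcF : F c ≠ 0 := hγ0 ▸ hγF 0 (by norm_num)
  -- the integrand along the segment
  set φ : ℝ → ℂ := fun τ => deriv F (γ τ) / F (γ τ) * (z₂ - c) with hφ
  have hγcont : Continuous γ := by
    exact continuous_const.add (Complex.continuous_ofReal.mul continuous_const)
  have hφcont : ContinuousOn φ (Icc 0 1) := by
    have hmaps : MapsTo γ (Icc 0 1) U := fun τ hτ => hγU τ hτ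
    have hFd : ContinuousOn (deriv F) U := ((hd.analyticOnNhd hU).deriv).continuousOn
    exact ((hFd.comp hγcont.continuousOn hmaps).div
      (hd.continuousOn.comp hγcont.continuousOn hmaps) (fun τ hτ => hγF τ hτ)).mul
      continuousOn_const
  set φt : ℝ → ℂ := IccExtend zero_le_one ((Icc (0:ℝ) 1).restrict φ) with hφt
  have hφtcont : Continuous φt := hφcont.restrict.Icc_extend'
  have hφteq : ∀ τ ∈ Icc (0:ℝ) 1, φt τ = φ τ := by
    intro τ hτ
    rw [hφt, IccExtend_of_mem _ _ hτ]
    rfl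
  -- the logarithm along the segment
  set L : ℝ → ℂ := fun τ => Complex.log (F c) + ∫ s in (0:ℝ)..τ, φt s with hL
  have hLderiv : ∀ τ, HasDerivAt L (φt τ) τ := by
    intro τ
    apply HasDerivAt.const_add
    exact integral_hasDerivAt_right (hφtcont.intervalIntegrable _ _)
      (hφtcont.stronglyMeasurableAtFilter _ _) hφtcont.continuousAt
  have hLcont : Continuous L := by
    exact continuous_iff_continuousAt.2 fun τ => (hLderiv τ).continuousAt
  have hL0 : L 0 = Complex.log (F c) := by simp [hL]
  have hγd : ∀ τ : ℝ, HasDerivAt γ (z₂ - c) τ := by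
    intro τ
    have h1 : HasDerivAt (fun τ : ℝ => τ • (z₂ - c)) ((1:ℝ) • (z₂ - c)) τ :=
      (hasDerivAt_id τ).smul_const _
    rw [one_smul] at h1
    have h2 : γ = fun τ : ℝ => c + τ • (z₂ - c) := by
      funext σ; rw [hγ]; simp [Complex.real_smul]
    rw [h2]
    exact h1.const_add c
  have hexpL : ∀ τ ∈ Icc (0:ℝ) 1, F (γ τ) = Complex.exp (L τ) := by
    set E : ℝ → ℂ := fun τ => Complex.exp (-L τ) * F (γ τ) with hE
    have hEd : ∀ τ ∈ Icc (0:ℝ) 1, HasDerivAt E 0 τ := by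
      intro τ hτ
      have hF : HasDerivAt F (deriv F (γ τ)) (γ τ) :=
        (hd.differentiableAt (hU.mem_nhds (hγU τ hτ))).hasDerivAt
      have hFγ : HasDerivAt (fun σ => F (γ σ)) (deriv F (γ τ) * (z₂ - c)) τ :=
        hF.comp τ (hγd τ)
      have hexpd : HasDerivAt (fun σ => Complex.exp (-L σ))
          (Complex.exp (-L τ) * (-φt τ)) τ := ((hLderiv τ).neg).cexp
      have hprod := hexpd.mul hFγ
      have hzero : Complex.exp (-L τ) * -φt τ * F (γ τ)
          + Complex.exp (-L τ) * (deriv F (γ τ) * (z₂ - c)) = 0 := by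
        rw [hφteq τ hτ, hφ]
        field_simp [hγF τ hτ]
        try ring
      rw [hzero] at hprod
      exact hprod
    have hEcont : ContinuousOn E (Icc 0 1) :=
      fun τ hτ => ((hEd τ hτ).continuousAt).continuousWithinAt
    have hconst := constant_of_has_deriv_right_zero hEcont
      (fun τ hτ => (hEd τ (Ico_subset_Icc_self hτ)).hasDerivWithinAt)
    have hE0 : E 0 = 1 := by
      rw [hE]
      simp only [hγ0, hL0]
      rw [Complex.exp_neg, Complex.exp_log hcF]
      exact inv_mul_cancel₀ hcF
    intro τ hτ
    have h3 : Complex.exp (-L τ) * F (γ τ) = 1 := by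
      rw [← hE0]; exact hconst τ hτ
    rw [Complex.exp_neg] at h3
    exact ((inv_mul_eq_one₀ (Complex.exp_ne_zero _)).1 h3).symm
  -- relation to segInt
  have hsegInt : segInt (fun w => deriv F w / F w) c z₂ = L 1 - L 0 := by
    rw [hL]
    simp only [add_sub_add_left_eq_sub, intervalIntegral.integral_same, sub_zero]
    rw [segInt]
    exact intervalIntegral.integral_congr fun τ hτ =>
      (hφteq τ (by rwa [uIcc_of_le zero_le_one] at hτ)).symm
  set ψ : ℝ → ℝ := fun τ => (L τ).im - (L 0).im with hψ
  have hψcont : Continuous ψ := (Complex.continuous_im.comp hLcont).sub continuous_const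
  have hψ0 : ψ 0 = 0 := by simp [hψ]
  set Δ : ℝ := ψ 1 with hΔ
  have hImseg : (segInt (fun w => deriv F w / F w) c z₂).im = Δ := by
    rw [hsegInt]; simp [hψ, hΔ]
  -- the reflected function
  set eiα : ℂ := Complex.exp (-(((L 0).im : ℝ) : ℂ) * Complex.I) with heiα
  set ref : ℂ → ℂ := fun z => (starRingEnd ℂ) z + 2 * (t:ℂ) * Complex.I with href
  set H : ℂ → ℂ := fun z => eiα * F z + (starRingEnd ℂ) (eiα * F (ref z)) with hH
  have hrefc : Continuous ref := continuous_conj.add continuous_const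
  have hrefsub : ∀ z : ℂ, ref z - c = (starRingEnd ℂ) (z - c) := by
    intro z
    simp only [href, hc, hz₂, map_sub, map_add, map_mul, Complex.conj_ofReal, Complex.conj_I]
    ring
  have hrefball : ∀ z ∈ closedBall c R, ref z ∈ closedBall c R := by
    intro z hz
    rw [mem_closedBall, dist_eq_norm, hrefsub z, RCLike.norm_conj]
    rw [mem_closedBall, dist_eq_norm] at hz
    exact hz
  set V : Set ℂ := U ∩ ref ⁻¹' U with hV
  have hVopen : IsOpen V := hU.inter (hU.preimage hrefc)
  have hVb : closedBall c R ⊆ V := fun z hz => ⟨hUb hz, hUb (hrefball z hz)⟩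
  have hHdiff : DifferentiableOn ℂ H V := by
    intro z hz
    apply DifferentiableAt.differentiableWithinAt
    have h1 : DifferentiableAt ℂ F z := hd.differentiableAt (hU.mem_nhds hz.1)
    have h2 : DifferentiableAt ℂ F (ref z) := hd.differentiableAt (hU.mem_nhds hz.2)
    have h3 : HasDerivAt (fun w => eiα * F w) (eiα * deriv F (ref z)) (ref z) :=
      h2.hasDerivAt.const_mul eiα
    have h4 := reflect_hasDerivAt (2*(t:ℂ)*Complex.I) (fun w => eiα * F w) z
      (eiα * deriv F (ref z)) h3
    exact (h1.const_mul eiα).add h4.differentiableAt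
  have habs_eiα : ‖eiα‖ = 1 := by
    rw [heiα, Complex.norm_exp]
    simp
  have hHbound : ∀ z ∈ closedBall c R, ‖H z‖ ≤ 2 * M := by
    intro z hz
    refine le_trans (norm_add_le _ _) ?_
    rw [RCLike.norm_conj, norm_mul, norm_mul, habs_eiα, one_mul, one_mul]
    have h1 := hbound z hz
    have h2 := hbound (ref z) (hrefball z hz)
    linarith
  have hrefc2 : ref c = c := by
    have h := hrefsub c
    rw [sub_self, map_zero] at h
    exact sub_eq_zero.1 h
  have hFc : F c = Complex.exp (L 0) := by
    rw [← hγ0]; exact hexpL 0 ⟨le_refl 0, zero_le_one⟩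
  have hkey0 : -((((L 0).im : ℝ)) : ℂ) * Complex.I + L 0 = (((L 0).re : ℝ) : ℂ) := by
    apply Complex.ext <;> simp
  have hw0 : eiα * F c = ((Real.exp ((L 0).re) : ℝ) : ℂ) := by
    rw [hFc, heiα, ← Complex.exp_add, hkey0, Complex.ofReal_exp]
  have hHc : ‖H c‖ = 2 * ‖F c‖ := by
    have hx : 0 < Real.exp ((L 0).re) := Real.exp_pos _
    have h5 : H c = (((2 * Real.exp ((L 0).re) : ℝ)) : ℂ) := by
      show eiα * F c + (starRingEnd ℂ) (eiα * F (ref c)) = _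
      rw [hrefc2, hw0, Complex.conj_ofReal]
      push_cast
      ring
    rw [h5, Complex.norm_real, Real.norm_eq_abs, abs_of_pos (by positivity), hFc, Complex.norm_exp]
  have hHzero : ∀ τ ∈ Icc (0:ℝ) 1, (∃ k : ℤ, ψ τ = (2 * k + 1) * Real.pi / 2) →
      H (γ τ) = 0 := by
    rintro τ hτ ⟨k, hk⟩
    have hrefγ : ref (γ τ) = γ τ := by
      have h := hrefsub (γ τ)
      have h2 : (starRingEnd ℂ) (γ τ - c) = γ τ - c := by
        rw [hγ]
        simp only [add_sub_cancel_left, hvc, map_mul, map_neg, Complex.conj_ofReal]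
      rw [h2] at h
      exact sub_left_inj.1 h
    have hw : eiα * F (γ τ) = Complex.exp (L τ - (((L 0).im : ℝ) : ℂ) * Complex.I) := by
      rw [hexpL τ hτ, heiα, ← Complex.exp_add]
      congr 1
      ring
    have hre : (Complex.exp (L τ - (((L 0).im : ℝ) : ℂ) * Complex.I)).re = 0 := by
      rw [Complex.exp_re]
      have him : (L τ - (((L 0).im : ℝ) : ℂ) * Complex.I).im = ψ τ := by simp [hψ]
      rw [him, hk, Real.cos_eq_zero_iff.2 ⟨k, rfl⟩, mul_zero]
    show eiα * F (γ τ) + (starRingEnd ℂ) (eiα * F (ref (γ τ))) = 0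
    rw [hrefγ, hw, Complex.add_conj, hre]
    simp
  -- the counting bound
  have hcount : ∀ N : ℕ, Real.pi / 2 + N * Real.pi ≤ |Δ| → (N + 1 : ℝ) ≤
      Real.log (M / m) / Real.log ρ := by
    intro N hN
    set sg : ℝ := if 0 ≤ Δ then 1 else -1 with hsg
    have hIVT : ∀ k : Fin (N+1), ∃ τ ∈ Icc (0:ℝ) 1,
        ψ τ = sg * (Real.pi/2 + k * Real.pi) := by
      intro k
      have hk : (k:ℝ) ≤ N := by exact_mod_cast Nat.le_of_lt_succ k.2
      have hb : Real.pi/2 + k*Real.pi ≤ |Δ| :=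
        le_trans (by nlinarith [Real.pi_pos]) hN
      have hpos : 0 ≤ Real.pi/2 + k*Real.pi := by positivity
      have hmem : sg * (Real.pi/2 + k * Real.pi) ∈ uIcc (ψ 0) (ψ 1) := by
        rw [hψ0, ← hΔ]
        by_cases hΔ0 : 0 ≤ Δ
        · rw [hsg, if_pos hΔ0, one_mul, uIcc_of_le hΔ0]
          rw [_root_.abs_of_nonneg hΔ0] at hb
          exact ⟨hpos, hb⟩
        · push_neg at hΔ0
          rw [hsg, if_neg (not_le.2 hΔ0), neg_one_mul, uIcc_of_ge hΔ0.le]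
          rw [_root_.abs_of_neg hΔ0] at hb
          exact ⟨by linarith, by linarith⟩
      obtain ⟨τ, hτ, hψτ⟩ := intermediate_value_uIcc
        (Continuous.continuousOn hψcont) hmem
      exact ⟨τ, by rwa [uIcc_of_le zero_le_one] at hτ, hψτ⟩
    choose τf hτf1 hτf2 using hIVT
    have hsg0 : sg ≠ 0 := by
      rw [hsg]; split <;> norm_num
    have hinj : Function.Injective (fun k : Fin (N+1) => γ (τf k)) := by
      intro k j h
      have hττ : τf k = τf j := hγinj _ _ (hτf1 k) (hτf1 j) h
      have hlev : sg * (Real.pi/2 + (k:ℝ) * Real.pi) = sg * (Real.pi/2 + (j:ℝ) * Real.pi) := by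
        rw [← hτf2 k, ← hτf2 j, hττ]
      have h2 := mul_left_cancel₀ hsg0 hlev
      have h3 : (k:ℝ) * Real.pi = (j:ℝ) * Real.pi := by linarith
      have h4 : ((k:ℕ):ℝ) = ((j:ℕ):ℝ) := mul_right_cancel₀ Real.pi_ne_zero h3
      exact Fin.ext (Nat.cast_injective h4)
    set l : List ℂ := List.ofFn (fun k : Fin (N+1) => γ (τf k)) with hl
    have hlnd : l.Nodup := List.nodup_ofFn.mpr hinj
    have hzs : ∀ w ∈ l, w ∈ closedBall c a ∧ H w = 0 := by
      intro w hw
      rw [hl, List.mem_ofFn] at hw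
      obtain ⟨k, rfl⟩ := hw
      refine ⟨hγball _ (hτf1 k), hHzero _ (hτf1 k) ?_⟩
      by_cases hΔ0 : 0 ≤ Δ
      · refine ⟨k, ?_⟩
        rw [hτf2 k, hsg, if_pos hΔ0]
        push_cast
        ring
      · refine ⟨-(k:ℤ)-1, ?_⟩
        rw [hτf2 k, hsg, if_neg hΔ0]
        push_cast
        ring
    have hzc := zero_count c a R (2*M) ha haR V hVopen hVb l hlnd H hHdiff hHbound hzs
    rw [hHc] at hzc
    have hlen : l.length = N + 1 := by rw [hl, List.length_ofFn]
    rw [hlen] at hzc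
    have hρpos : 0 < ρ := by positivity
    have hρpow : 0 < ρ ^ (N+1) := pow_pos hρpos _
    have h6 : m * ρ^(N+1) ≤ M := by nlinarith [hmF]
    have h7 : Real.log (m * ρ^(N+1)) ≤ Real.log M :=
      Real.log_le_log (by positivity) h6
    rw [Real.log_mul hm.ne' (pow_ne_zero _ hρpos.ne'), Real.log_pow] at h7
    rw [le_div_iff₀ hlogρ, Real.log_div hM.ne' hm.ne']
    push_cast at h7 ⊢
    linarith
  -- conclude
  have hMm : 0 ≤ Real.log (M / m) := by
    apply Real.log_nonneg
    rw [le_div_iff₀ hm]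
    have := hbound c (mem_closedBall_self hR0.le)
    linarith
  have hfinal : |Δ| ≤ Real.pi / 2 + Real.pi * (Real.log (M / m) / Real.log ρ) := by
    by_contra hcon
    push_neg at hcon
    set K : ℝ := Real.log (M / m) / Real.log ρ with hK
    have hK0 : 0 ≤ K := by positivity
    have hΔpos : Real.pi / 2 < |Δ| := by nlinarith [Real.pi_pos]
    set N : ℕ := ⌊(|Δ| - Real.pi / 2) / Real.pi⌋₊ with hN
    have hNle : (N : ℝ) ≤ (|Δ| - Real.pi / 2) / Real.pi :=
      Nat.floor_le (div_nonneg (by linarith) Real.pi_pos.le)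
    have hlt : (|Δ| - Real.pi / 2) / Real.pi < N + 1 := Nat.lt_floor_add_one _
    have h1 : Real.pi / 2 + N * Real.pi ≤ |Δ| := by
      rw [le_div_iff₀ Real.pi_pos] at hNle; linarith
    have h2 := hcount N h1
    rw [div_lt_iff₀ Real.pi_pos] at hlt
    nlinarith [Real.pi_pos]
  rw [hImseg]
  calc |Δ| ≤ Real.pi / 2 + Real.pi * (Real.log (M / m) / Real.log ρ) := hfinal
    _ ≤ (Real.pi + Real.pi / Real.log ρ) * (1 + Real.log (M / m)) := by
        have e1 : (Real.pi + Real.pi / Real.log ρ) * (1 + Real.log (M / m))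
            = Real.pi + Real.pi * Real.log (M/m) + Real.pi/Real.log ρ
              + (Real.pi/Real.log ρ) * Real.log (M/m) := by ring
        have e2 : Real.pi * (Real.log (M/m) / Real.log ρ)
            = (Real.pi/Real.log ρ) * Real.log (M/m) := by ring
        have p1 : 0 ≤ Real.pi * Real.log (M/m) := by positivity
        have p2 : 0 < Real.pi / Real.log ρ := by positivity
        rw [e1, e2]
        linarith [Real.pi_pos]
end
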